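/- arXiv:math/0208135 — 2 statements merged into one kernel-verified Lean document; each statement's English description precedes it below -/
import Mathlib

section
/- Let (Z,d,μ) be a compact Ahlfors Q-regular metric space with Q > 1 which carries a family of nonconstant paths with positive Q-modulus, and let G ↷ Z be a uniformly quasi-Möbius action which is fixed point free and acts cocompactly on the space of distinct triples. Then there exist disjoint open balls B and B' in Z such that the set of initial points in B of thick paths connecting B and B' has a point of density in B (with respect to μ). -/
open Metric Set MeasureTheory Filter Topology unitInterval
open scoped NNReal ENNReal

noncomputable section

/-- The length (total variation) of a continuous path. -/
def pathLength {Z : Type*} [MetricSpace Z] (γ : C(unitInterval, Z)) : ℝ≥0∞ :=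
  eVariationOn γ Set.univ

/-- The (real-valued) arclength function of a path. -/
def pathVar {Z : Type*} [MetricSpace Z] (γ : C(unitInterval, Z)) (t : ℝ) : ℝ :=
  (eVariationOn γ {s : unitInterval | (s : ℝ) ≤ t}).toReal

/-- The arclength (Stieltjes) measure on the parameter interval associated to a path. -/
def lengthMeasure {Z : Type*} [MetricSpace Z] (γ : C(unitInterval, Z)) :
    MeasureTheory.Measure ℝ :=
  letI := Classical.propDecidable (Monotone (pathVar γ))
  if h : Monotone (pathVar γ) then h.stieltjesFunction.measure else 0

/-- The line integral `∫_γ ρ ds` of a density `ρ` along a path `γ` (with respect to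
arclength). -/
def pathIntegral {Z : Type*} [MetricSpace Z] (ρ : Z → ℝ≥0∞) (γ : C(unitInterval, Z)) : ℝ≥0∞ :=
  ∫⁻ t, ρ (γ (Set.projIcc 0 1 zero_le_one t)) ∂(lengthMeasure γ)

/-- A density is admissible for a path family if every rectifiable path in the family has
`ρ`-length at least one. -/
def Admissible {Z : Type*} [MetricSpace Z] (ρ : Z → ℝ≥0∞) (Γ : Set C(unitInterval, Z)) : Prop :=
  ∀ γ ∈ Γ, pathLength γ < ⊤ → 1 ≤ pathIntegral ρ γ

/-- The `Q`-modulus of a family of paths in `Z`. -/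
def modulus {Z : Type*} [MetricSpace Z] [MeasurableSpace Z] (Q : ℝ) (μ : Measure Z)
    (Γ : Set C(unitInterval, Z)) : ℝ≥0∞ :=
  ⨅ (ρ : Z → ℝ≥0∞) (_ : Measurable ρ) (_ : Admissible ρ Γ), ∫⁻ z, ρ z ^ Q ∂μ

/-- A path is nonconstant if it takes at least two values. -/
def Nonconstant {Z : Type*} [MetricSpace Z] (γ : C(unitInterval, Z)) : Prop :=
  ∃ s t, γ s ≠ γ t

/-- A measure `μ` on a metric space is Ahlfors `Q`-regular. -/
def AhlforsRegular {Z : Type*} [MetricSpace Z] [MeasurableSpace Z] (μ : Measure Z)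
    (Q : ℝ) : Prop :=
  ∃ C : ℝ≥0, 1 ≤ C ∧ ∀ (a : Z) (R : ℝ), 0 < R →
    ENNReal.ofReal R ≤ EMetric.diam (Set.univ : Set Z) →
      ENNReal.ofReal (R ^ Q) / C ≤ μ (Metric.ball a R) ∧
      μ (Metric.ball a R) ≤ C * ENNReal.ofReal (R ^ Q)

/-- The metric cross-ratio of a four-tuple of points. -/
def crossRatio {Z : Type*} [MetricSpace Z] (z₁ z₂ z₃ z₄ : Z) : ℝ≥0 :=
  (nndist z₁ z₃ * nndist z₂ z₄) / (nndist z₁ z₄ * nndist z₂ z₃)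

/-- A map is `η`-quasi-Möbius if it distorts cross-ratios of distinct four-tuples in a way
controlled by the homeomorphism `η : [0,∞) → [0,∞)`. -/
def IsQuasiMobius {X Y : Type*} [MetricSpace X] [MetricSpace Y] (η : ℝ≥0 ≃ₜ ℝ≥0)
    (f : X → Y) : Prop :=
  ∀ x₁ x₂ x₃ x₄ : X, x₁ ≠ x₂ → x₁ ≠ x₃ → x₁ ≠ x₄ → x₂ ≠ x₃ → x₂ ≠ x₄ → x₃ ≠ x₄ →
    crossRatio (f x₁) (f x₂) (f x₃) (f x₄) ≤ η (crossRatio x₁ x₂ x₃ x₄)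

/-- A map is `η`-quasisymmetric. -/
def IsQuasisymmetric {X Y : Type*} [MetricSpace X] [MetricSpace Y] (η : ℝ≥0 ≃ₜ ℝ≥0)
    (f : X → Y) : Prop :=
  ∀ x₁ x₂ x₃ : X, x₁ ≠ x₂ → x₁ ≠ x₃ → x₂ ≠ x₃ →
    nndist (f x₁) (f x₂) / nndist (f x₁) (f x₃) ≤ η (nndist x₁ x₂ / nndist x₁ x₃)

/-- A metric space is Ahlfors `Q`-regular (with respect to `Q`-dimensional Hausdorff
measure). -/
def AhlforsRegularSpace (Y : Type*) [MetricSpace Y] (Q : ℝ) : Prop :=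
  letI : MeasurableSpace Y := borel Y
  haveI : BorelSpace Y := ⟨rfl⟩
  AhlforsRegular (μH[Q] : Measure Y) Q

/-- The Ahlfors regular conformal dimension of a metric space: the infimum of the Hausdorff
dimensions of all Ahlfors regular metric spaces quasisymmetrically homeomorphic to it. -/
def arConfDim (Z : Type u) [MetricSpace Z] : ℝ≥0∞ :=
  sInf { D : ℝ≥0∞ | ∃ (Y : Type u) (_ : MetricSpace Y) (Q' : ℝ) (η : ℝ≥0 ≃ₜ ℝ≥0) (f : Z ≃ₜ Y),
      AhlforsRegularSpace Y Q' ∧ IsQuasisymmetric η f ∧ D = dimH (Set.univ : Set Y) }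

/-- The distance between two subsets of a metric space, as an extended real. -/
def setSep {Z : Type*} [MetricSpace Z] (E F : Set Z) : ℝ≥0∞ :=
  ⨅ (x ∈ E) (y ∈ F), edist x y

/-- The relative distance `Δ(E,F) = dist(E,F)/min(diam E, diam F)` of two sets. -/
def relDist {Z : Type*} [MetricSpace Z] (E F : Set Z) : ℝ≥0∞ :=
  setSep E F / min (EMetric.diam E) (EMetric.diam F)

/-- The family of paths joining `E` to `F`. -/
def joinPaths {Z : Type*} [MetricSpace Z] (E F : Set Z) : Set C(unitInterval, Z) :=
  {γ | γ 0 ∈ E ∧ γ 1 ∈ F}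

/-- A metric measure space is `Q`-Loewner if it is connected and the `Q`-modulus of the family
of paths joining two disjoint nondegenerate continua is bounded below by a positive decreasing
function of their relative distance. -/
def IsLoewner (Z : Type*) [MetricSpace Z] [MeasurableSpace Z] (Q : ℝ) (μ : Measure Z) : Prop :=
  ConnectedSpace Z ∧
  ∃ Ψ : ℝ≥0∞ → ℝ≥0∞, Antitone Ψ ∧ (∀ t, t ≠ 0 → t ≠ ⊤ → 0 < Ψ t) ∧
    ∀ E F : Set Z, IsCompact E → IsConnected E → E.Nontrivial →
      IsCompact F → IsConnected F → F.Nontrivial → Disjoint E F →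
      Ψ (relDist E F) ≤ modulus Q μ (joinPaths E F)

/-- A path is thick if every neighborhood of it in `C([0,1],Z)` contains a family of
nonconstant paths of positive `Q`-modulus. -/
def IsThick {Z : Type*} [MetricSpace Z] [MeasurableSpace Z] (Q : ℝ) (μ : Measure Z)
    (γ : C(unitInterval, Z)) : Prop :=
  ∀ ε : ℝ, 0 < ε → 0 < modulus Q μ {α | α ∈ Metric.ball γ ε ∧ Nonconstant α}

end

noncomputable section
namespace BK

open Metric Set MeasureTheory Filter Topology unitInterval
open scoped NNReal ENNReal

variable {Z : Type*} [MetricSpace Z]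

/-! ### Basic facts about `pathVar` -/

lemma eVariationOn_le_pathLength (γ : C(unitInterval, Z)) (s : Set unitInterval) :
    eVariationOn γ s ≤ pathLength γ :=
  eVariationOn.mono γ (Set.subset_univ s)

lemma pathVar_nonneg (γ : C(unitInterval, Z)) (t : ℝ) : 0 ≤ pathVar γ t :=
  ENNReal.toReal_nonneg

lemma setLe_eq_Icc {t : ℝ} (ht : 0 ≤ t) :
    {s : unitInterval | (s : ℝ) ≤ t} = Icc 0 (Set.projIcc 0 1 zero_le_one t) := by
  ext s
  have h1 : (0:ℝ) ≤ (s : ℝ) := s.2.1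
  have h2 : (s : ℝ) ≤ 1 := s.2.2
  have hproj : ((Set.projIcc 0 1 zero_le_one t : unitInterval) : ℝ) = max 0 (min 1 t) := rfl
  simp only [mem_setOf_eq, mem_Icc, ← Subtype.coe_le_coe, hproj]
  constructor
  · intro h
    exact ⟨h1, le_max_of_le_right (le_min h2 h)⟩
  · rintro ⟨-, h⟩
    rcases le_max_iff.1 h with h' | h'
    · exact h'.trans ht
    · exact (le_min_iff.1 h').2

lemma pathVar_of_nonneg (γ : C(unitInterval, Z)) {t : ℝ} (ht : 0 ≤ t) :
    pathVar γ t = (eVariationOn γ (Icc 0 (Set.projIcc 0 1 zero_le_one t))).toReal := by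
  rw [pathVar, setLe_eq_Icc ht]

lemma pathVar_of_neg (γ : C(unitInterval, Z)) {t : ℝ} (ht : t < 0) :
    pathVar γ t = 0 := by
  have : {s : unitInterval | (s : ℝ) ≤ t} = (∅ : Set unitInterval) := by
    ext s
    simp only [mem_setOf_eq, mem_empty_iff_false, iff_false, not_le]
    exact ht.trans_le s.2.1
  rw [pathVar, this, eVariationOn.subsingleton γ subsingleton_empty]
  simp

lemma pathVar_mono (γ : C(unitInterval, Z)) (hγ : pathLength γ ≠ ⊤) :
    Monotone (pathVar γ) := by
  intro s t hst
  rcases lt_or_ge s 0 with hs | hs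
  · rw [pathVar_of_neg γ hs]; exact pathVar_nonneg γ t
  · rw [pathVar_of_nonneg γ hs, pathVar_of_nonneg γ (hs.trans hst)]
    refine ENNReal.toReal_mono (lt_of_le_of_lt (eVariationOn_le_pathLength γ _)
      (lt_top_iff_ne_top.2 hγ)).ne ?_
    exact eVariationOn.mono γ (Icc_subset_Icc le_rfl (monotone_projIcc zero_le_one hst))

lemma pathVar_eq_of_mem (γ : C(unitInterval, Z)) {t : ℝ} (ht : t ∈ Icc (0:ℝ) 1) :
    pathVar γ t = (eVariationOn γ (Icc 0 ⟨t, ht⟩)).toReal := by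
  rw [pathVar_of_nonneg γ ht.1, Set.projIcc_of_mem zero_le_one ht]

/-! ### Subpaths -/

variable {a b : ℝ}

/-- The clamp of `u` into `[a,b]`, on the unit interval. -/
def subσ (h0 : 0 ≤ a) (hab : a ≤ b) (h1 : b ≤ 1) (u : unitInterval) : unitInterval :=
  ⟨min b (max a (u : ℝ)),
    ⟨le_min (h0.trans hab) (h0.trans (le_max_left a _)), (min_le_left _ _).trans h1⟩⟩

lemma subσ_monotone (h0 : 0 ≤ a) (hab : a ≤ b) (h1 : b ≤ 1) :
    Monotone (subσ h0 hab h1) := by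
  intro u v huv
  simp only [subσ, ← Subtype.coe_le_coe]
  exact min_le_min le_rfl (max_le_max le_rfl huv)

lemma subσ_continuous (h0 : 0 ≤ a) (hab : a ≤ b) (h1 : b ≤ 1) :
    Continuous (subσ h0 hab h1) :=
  Continuous.subtype_mk (continuous_const.min (continuous_const.max continuous_subtype_val)) _

/-- The subpath of `γ` between times `a` and `b`, parametrized by clamping. -/
def subPath (γ : C(unitInterval, Z)) (h0 : 0 ≤ a) (hab : a ≤ b) (h1 : b ≤ 1) :
    C(unitInterval, Z) :=
  ⟨fun u => γ (subσ h0 hab h1 u), γ.continuous.comp (subσ_continuous h0 hab h1)⟩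

lemma subPath_apply (γ : C(unitInterval, Z)) (h0 : 0 ≤ a) (hab : a ≤ b) (h1 : b ≤ 1)
    (u : unitInterval) : subPath γ h0 hab h1 u = γ (subσ h0 hab h1 u) := rfl

lemma subσ_of_le (h0 : 0 ≤ a) (hab : a ≤ b) (h1 : b ≤ 1) {u : unitInterval}
    (hu : (u : ℝ) ≤ a) : subσ h0 hab h1 u = ⟨a, h0, hab.trans h1⟩ := by
  simp only [subσ, Subtype.mk.injEq]
  exact Subtype.ext (by show min b (max a (u:ℝ)) = a; rw [max_eq_left hu, min_eq_right hab])

lemma subσ_of_ge (h0 : 0 ≤ a) (hab : a ≤ b) (h1 : b ≤ 1) {u : unitInterval}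
    (hu : b ≤ (u : ℝ)) : subσ h0 hab h1 u = ⟨b, h0.trans hab, h1⟩ := by
  simp only [subσ, Subtype.mk.injEq]
  exact Subtype.ext (by show min b (max a (u:ℝ)) = b; rw [max_eq_right (hab.trans hu), min_eq_left hu])

lemma subσ_of_mem (h0 : 0 ≤ a) (hab : a ≤ b) (h1 : b ≤ 1) {u : unitInterval}
    (hua : a ≤ (u : ℝ)) (hub : (u : ℝ) ≤ b) : subσ h0 hab h1 u = u := by
  apply Subtype.ext
  show min b (max a (u:ℝ)) = (u:ℝ)
  rw [max_eq_right hua, min_eq_right hub]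

lemma subPath_zero (γ : C(unitInterval, Z)) (h0 : 0 ≤ a) (hab : a ≤ b) (h1 : b ≤ 1) :
    subPath γ h0 hab h1 0 = γ ⟨a, h0, hab.trans h1⟩ := by
  rw [subPath_apply, subσ_of_le] ; exact h0

lemma subPath_one (γ : C(unitInterval, Z)) (h0 : 0 ≤ a) (hab : a ≤ b) (h1 : b ≤ 1) :
    subPath γ h0 hab h1 1 = γ ⟨b, h0.trans hab, h1⟩ := by
  rw [subPath_apply, subσ_of_ge] ; exact h1

lemma subσ_image (h0 : 0 ≤ a) (hab : a ≤ b) (h1 : b ≤ 1) (u : unitInterval) :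
    subσ h0 hab h1 '' (Icc 0 u) =
      Icc ⟨a, h0, hab.trans h1⟩ (subσ h0 hab h1 u) := by
  apply Set.Subset.antisymm
  · rintro y ⟨x, hx, rfl⟩
    constructor
    · rw [← Subtype.coe_le_coe]
      exact le_min hab (le_max_left _ _)
    · exact subσ_monotone h0 hab h1 hx.2
  · rintro y ⟨hy1, hy2⟩
    rcases le_total a (u : ℝ) with hau | hau
    · -- subσ u has coordinate min b (max a u) = min b u ≥ ... ; y itself works
      have hyb : (y : ℝ) ≤ b := by
        have := Subtype.coe_le_coe.2 hy2
        calc (y:ℝ) ≤ (subσ h0 hab h1 u : ℝ) := this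
        _ ≤ b := min_le_left _ _
      have hya : a ≤ (y : ℝ) := Subtype.coe_le_coe.2 hy1
      refine ⟨y, ⟨?_, ?_⟩, subσ_of_mem h0 hab h1 hya hyb⟩
      · exact Subtype.coe_le_coe.1 (h0.trans hya)
      · -- y ≤ u
        rw [← Subtype.coe_le_coe]
        have := Subtype.coe_le_coe.2 hy2
        calc (y:ℝ) ≤ (subσ h0 hab h1 u : ℝ) := this
        _ = min b (max a (u:ℝ)) := rfl
        _ ≤ max a (u:ℝ) := min_le_right _ _
        _ = (u:ℝ) := max_eq_right hau
    · -- u ≤ a : then subσ u = a and the interval is a singleton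
      have hσu : subσ h0 hab h1 u = ⟨a, h0, hab.trans h1⟩ := subσ_of_le h0 hab h1 hau
      have : y = ⟨a, h0, hab.trans h1⟩ := le_antisymm (hσu ▸ hy2) hy1
      exact ⟨u, ⟨Subtype.coe_le_coe.1 u.2.1, le_rfl⟩, by rw [hσu, this]⟩

lemma pathLength_subPath_le (γ : C(unitInterval, Z)) (h0 : 0 ≤ a) (hab : a ≤ b) (h1 : b ≤ 1) :
    pathLength (subPath γ h0 hab h1) ≤ pathLength γ := by
  rw [pathLength, pathLength]
  exact eVariationOn.comp_le_of_monotoneOn γ _ ((subσ_monotone h0 hab h1).monotoneOn _)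
    (Set.mapsTo_univ _ _)

/-- The clamp function on `ℝ`. -/
def clampR (a b t : ℝ) : ℝ := min b (max a t)

lemma clampR_mono (hab : a ≤ b) : Monotone (clampR a b) := fun _ _ h =>
  min_le_min le_rfl (max_le_max le_rfl h)

/-- Main formula : the arclength function of a subpath. -/
lemma pathVar_subPath (γ : C(unitInterval, Z)) (h0 : 0 ≤ a) (hab : a ≤ b) (h1 : b ≤ 1)
    (hγ : pathLength γ ≠ ⊤) (t : ℝ) :
    pathVar (subPath γ h0 hab h1) t = pathVar γ (clampR a b t) - pathVar γ a := by
  have hmem_a : a ∈ Icc (0:ℝ) 1 := ⟨h0, hab.trans h1⟩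
  rcases lt_or_ge t 0 with ht | ht
  · rw [pathVar_of_neg _ ht]
    have : clampR a b t = a := by
      rw [clampR, max_eq_left (ht.le.trans h0), min_eq_right hab]
    rw [this, sub_self]
  · -- 0 ≤ t
    have hct : clampR a b t ∈ Icc (0:ℝ) 1 := ⟨le_min (h0.trans hab) (h0.trans (le_max_left _ _)),
        (min_le_left _ _).trans h1⟩
    have hact : a ≤ clampR a b t := le_min hab (le_max_left _ _)
    rw [pathVar_of_nonneg _ ht, pathVar_eq_of_mem γ hct, pathVar_eq_of_mem γ hmem_a]
    -- subσ of the projection is the clamp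
    have hproj : subσ h0 hab h1 (Set.projIcc 0 1 zero_le_one t) = ⟨clampR a b t, hct⟩ := by
      simp only [subσ, Set.projIcc, Subtype.mk.injEq, clampR]
      rcases le_total t 1 with h | h
      · rw [min_eq_right h, max_eq_right ht]
      · rw [min_eq_left h, max_eq_right (zero_le_one : (0:ℝ) ≤ 1), max_eq_right (hab.trans h1),
          min_eq_left h1, max_eq_right ((hab.trans h1).trans h), min_eq_left (h1.trans h)]
    -- variation of composition
    have hcomp : eVariationOn (⇑(subPath γ h0 hab h1)) (Icc 0 (Set.projIcc 0 1 zero_le_one t)) =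
        eVariationOn γ (Icc ⟨a, hmem_a⟩ ⟨clampR a b t, hct⟩) := by
      have := eVariationOn.comp_eq_of_monotoneOn (γ : unitInterval → Z)
        (subσ h0 hab h1)
        ((subσ_monotone h0 hab h1).monotoneOn (Icc 0 (Set.projIcc 0 1 zero_le_one t)))
      rw [subσ_image, hproj] at this
      exact this
    rw [hcomp]
    -- additivity
    have hadd := eVariationOn.Icc_add_Icc (γ : unitInterval → Z)
      (a := (0 : unitInterval)) (b := ⟨a, hmem_a⟩) (c := ⟨clampR a b t, hct⟩)
      (Subtype.coe_le_coe.1 (by exact h0)) (Subtype.coe_le_coe.1 hact) (mem_univ _)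
    simp only [Set.univ_inter] at hadd
    have hfin1 : eVariationOn (γ : unitInterval → Z) (Icc 0 ⟨a, hmem_a⟩) ≠ ⊤ :=
      (lt_of_le_of_lt (eVariationOn_le_pathLength γ _) (lt_top_iff_ne_top.2 hγ)).ne
    have hfin2 : eVariationOn (γ : unitInterval → Z) (Icc ⟨a, hmem_a⟩ ⟨clampR a b t, hct⟩) ≠ ⊤ :=
      (lt_of_le_of_lt (eVariationOn_le_pathLength γ _) (lt_top_iff_ne_top.2 hγ)).ne
    have := congrArg ENNReal.toReal hadd
    rw [ENNReal.toReal_add hfin1 hfin2] at this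
    linarith

end BK
noncomputable section
namespace BK

open Metric Set MeasureTheory Filter Topology unitInterval Function
open scoped NNReal ENNReal

variable {Z : Type*} [MetricSpace Z] {a b : ℝ}

/-- A sequence tending to `x` from the right. -/
lemma tendsto_seq_nhdsWithin_Ioi (x : ℝ) :
    Tendsto (fun n : ℕ => x + 1 / (n + 1)) atTop (𝓝[>] x) := by
  apply tendsto_nhdsWithin_of_tendsto_nhds_of_eventually_within
  · have : Tendsto (fun n : ℕ => 1 / ((n : ℝ) + 1)) atTop (𝓝 0) :=
      tendsto_one_div_add_atTop_nhds_zero_nat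
    simpa using tendsto_const_nhds.add this
  · filter_upwards with n
    have : (0:ℝ) < 1 / ((n : ℝ) + 1) := by positivity
    simpa using this

lemma rightLim_incr_le {F G : ℝ → ℝ} (hF : Monotone F) (hG : Monotone G)
    (h : ∀ u v : ℝ, u ≤ v → G v - G u ≤ F v - F u) {u v : ℝ} (huv : u ≤ v) :
    rightLim G v - rightLim G u ≤ rightLim F v - rightLim F u := by
  have hGu := (hG.tendsto_rightLim u).comp (tendsto_seq_nhdsWithin_Ioi u)
  have hGv := (hG.tendsto_rightLim v).comp (tendsto_seq_nhdsWithin_Ioi v)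
  have hFu := (hF.tendsto_rightLim u).comp (tendsto_seq_nhdsWithin_Ioi u)
  have hFv := (hF.tendsto_rightLim v).comp (tendsto_seq_nhdsWithin_Ioi v)
  refine le_of_tendsto_of_tendsto' (hGv.sub hGu) (hFv.sub hFu) fun n => ?_
  exact h _ _ (by simp only; linarith)

/-- If `G` is monotone and eventually constant equal to `c` on `[x₀, ∞)`, then
`rightLim G t = c` for `t ≥ x₀`. -/
lemma rightLim_of_const_ge {G : ℝ → ℝ} (hG : Monotone G) {x₀ c : ℝ}
    (h : ∀ t, x₀ ≤ t → G t = c) {t : ℝ} (ht : x₀ ≤ t) : rightLim G t = c := by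
  refine le_antisymm ?_ ?_
  · have := hG.rightLim_le (lt_add_one t)
    rwa [h (t + 1) (by linarith)] at this
  · have := hG.le_rightLim (le_refl t)
    rwa [h t ht] at this

/-- If `G` is monotone and constant equal to `c` on `(-∞, x₀]`, then `rightLim G t = c`
for `t < x₀`. -/
lemma rightLim_of_const_lt {G : ℝ → ℝ} (hG : Monotone G) {x₀ c : ℝ}
    (h : ∀ t, t ≤ x₀ → G t = c) {t : ℝ} (ht : t < x₀) : rightLim G t = c := by
  refine le_antisymm ?_ ?_
  · have := hG.rightLim_le (show t < min x₀ ((t + x₀)/2) by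
      rcases le_total x₀ ((t + x₀)/2) with h' | h'
      · rw [min_eq_left h']; linarith
      · rw [min_eq_right h']; linarith)
    rwa [h _ (min_le_left _ _)] at this
  · have := hG.le_rightLim (le_refl t)
    rwa [h t ht.le] at this

section SubPathIntegral

variable (γ : C(unitInterval, Z)) (h0 : 0 ≤ a) (hab : a ≤ b) (h1 : b ≤ 1)

lemma pathLength_subPath_ne_top (hγ : pathLength γ ≠ ⊤) :
    pathLength (subPath γ h0 hab h1) ≠ ⊤ :=
  ((pathLength_subPath_le γ h0 hab h1).trans_lt (lt_top_iff_ne_top.2 hγ)).ne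

lemma lengthMeasure_of_monotone {γ' : C(unitInterval, Z)} (h : Monotone (pathVar γ')) :
    lengthMeasure γ' = h.stieltjesFunction.measure := by
  rw [lengthMeasure]
  exact dif_pos h

/-- The key comparison: the length measure of a subpath is dominated by the length measure
of the path. -/
lemma lengthMeasure_subPath_le (hγ : pathLength γ ≠ ⊤) :
    lengthMeasure (subPath γ h0 hab h1) ≤ lengthMeasure γ := by
  set W := pathVar γ with hWdef
  set G := pathVar (subPath γ h0 hab h1) with hGdef
  have hW : Monotone W := pathVar_mono γ hγ
  have hG : Monotone G := pathVar_mono _ (pathLength_subPath_ne_top γ h0 hab h1 hγ)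
  have hincr : ∀ u v : ℝ, u ≤ v → G v - G u ≤ W v - W u := by
    intro u v huv
    rw [hGdef, pathVar_subPath γ h0 hab h1 hγ, pathVar_subPath γ h0 hab h1 hγ]
    have key : W (clampR a b v) + W u ≤ W (clampR a b u) + W v := by
      rcases le_total u a with hua | hua
      · have hcu : clampR a b u = a := by
          rw [clampR, max_eq_left hua, min_eq_right hab]
        rcases le_total v a with hva | hva
        · have hcv : clampR a b v = a := by
            rw [clampR, max_eq_left hva, min_eq_right hab]
          rw [hcu, hcv]
          exact add_le_add le_rfl (hW huv)
        · rcases le_total v b with hvb | hvb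
          · have hcv : clampR a b v = v := by
              rw [clampR, max_eq_right hva, min_eq_right hvb]
            rw [hcu, hcv, add_comm]
            exact add_le_add (hW hua) le_rfl
          · have hcv : clampR a b v = b := by
              rw [clampR, max_eq_right hva, min_eq_left hvb]
            rw [hcu, hcv]
            exact add_le_add (hW hua) (hW hvb) |>.trans_eq (add_comm _ _) |>.trans_eq rfl
              |> fun h => by linarith [hW hua, hW hvb]
      · have hcu' : clampR a b u = min b u := by rw [clampR, max_eq_right hua]
        rcases le_total u b with hub | hub
        · have hcu : clampR a b u = u := by rw [hcu', min_eq_right hub]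
          rcases le_total v b with hvb | hvb
          · have hcv : clampR a b v = v := by
              rw [clampR, max_eq_right (hua.trans huv), min_eq_right hvb]
            rw [hcu, hcv, add_comm]
          · have hcv : clampR a b v = b := by
              rw [clampR, max_eq_right (hua.trans huv), min_eq_left hvb]
            rw [hcu, hcv, add_comm]
            exact add_le_add le_rfl (hW hvb)
        · have hcu : clampR a b u = b := by rw [hcu', min_eq_left hub]
          have hcv : clampR a b v = b := by
            rw [clampR, max_eq_right (hua.trans huv), min_eq_left (hub.trans huv)]
          rw [hcu, hcv]
          exact add_le_add le_rfl (hW huv)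
    linarith
  -- pass to right limits
  have hrl : ∀ u v : ℝ, u ≤ v →
      hG.stieltjesFunction v - hG.stieltjesFunction u ≤
      hW.stieltjesFunction v - hW.stieltjesFunction u := by
    intro u v huv
    simpa only [Monotone.stieltjesFunction_eq] using rightLim_incr_le hW hG hincr huv
  -- the difference Stieltjes function
  set D : StieltjesFunction ℝ :=
    { toFun := fun t => hW.stieltjesFunction t - hG.stieltjesFunction t
      mono' := by
        intro u v huv
        have := hrl u v huv
        simp only
        linarith
      right_continuous' := fun x =>
        ((hW.stieltjesFunction.right_continuous x).sub
          (hG.stieltjesFunction.right_continuous x)) } with hD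
  have hsum : hW.stieltjesFunction.measure = hG.stieltjesFunction.measure + D.measure := by
    refine Measure.ext_of_Ioc _ _ fun u v huv => ?_
    rw [Measure.add_apply, StieltjesFunction.measure_Ioc, StieltjesFunction.measure_Ioc,
      StieltjesFunction.measure_Ioc]
    have h1' : 0 ≤ hG.stieltjesFunction v - hG.stieltjesFunction u := by
      have := hG.stieltjesFunction.mono huv.le; linarith
    have h2' : 0 ≤ D v - D u := by
      have := D.mono huv.le; linarith
    rw [← ENNReal.ofReal_add h1' h2']
    congr 1
    show _ = _ + (hW.stieltjesFunction v - hG.stieltjesFunction v -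
      (hW.stieltjesFunction u - hG.stieltjesFunction u))
    ring
  rw [lengthMeasure_of_monotone hG, lengthMeasure_of_monotone hW]
  intro s
  rw [hsum, Measure.add_apply]
  exact le_self_add

end SubPathIntegral

end BK
noncomputable section
namespace BK

open Metric Set MeasureTheory Filter Topology unitInterval Function
open scoped NNReal ENNReal

variable {Z : Type*} [MetricSpace Z] {a b : ℝ}

lemma clampR_of_le (hab : a ≤ b) {t : ℝ} (ht : t ≤ a) : clampR a b t = a := by
  rw [clampR, max_eq_left ht, min_eq_right hab]

lemma clampR_of_ge (hab : a ≤ b) {t : ℝ} (ht : b ≤ t) : clampR a b t = b := by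
  rw [clampR, max_eq_right (hab.trans ht), min_eq_left ht]

section SubPathIntegral

variable (γ : C(unitInterval, Z)) (h0 : 0 ≤ a) (hab : a ≤ b) (h1 : b ≤ 1)

/-- The line integral along a subpath is at most the line integral along the path. -/
lemma pathIntegral_subPath_le (hγ : pathLength γ ≠ ⊤) (ρ : Z → ℝ≥0∞) :
    pathIntegral ρ (subPath γ h0 hab h1) ≤ pathIntegral ρ γ := by
  have hmem_a : a ∈ Icc (0:ℝ) 1 := ⟨h0, hab.trans h1⟩
  set g := subPath γ h0 hab h1 with hgdef
  set f : ℝ → ℝ≥0∞ := fun t => ρ (γ (Set.projIcc 0 1 zero_le_one t)) with hfdef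
  have hWm : Monotone (pathVar γ) := pathVar_mono γ hγ
  have hGm : Monotone (pathVar g) := pathVar_mono _ (pathLength_subPath_ne_top γ h0 hab h1 hγ)
  have hμle : lengthMeasure g ≤ lengthMeasure γ := lengthMeasure_subPath_le γ h0 hab h1 hγ
  have hGa0 : ∀ t, t ≤ a → pathVar g t = 0 := by
    intro t ht
    rw [hgdef, pathVar_subPath γ h0 hab h1 hγ, clampR_of_le hab ht, sub_self]
  have hGbL : ∀ t, b ≤ t → pathVar g t = pathVar γ b - pathVar γ a := by
    intro t ht
    rw [hgdef, pathVar_subPath γ h0 hab h1 hγ, clampR_of_ge hab ht]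
  -- the arclength measure of `g`, computed via its Stieltjes function
  have hFG_bot : Tendsto (hGm.stieltjesFunction) atBot (𝓝 0) := by
    have hev : ∀ᶠ t in atBot, (hGm.stieltjesFunction) t = 0 := by
      filter_upwards [eventually_lt_atBot a] with t ht
      rw [Monotone.stieltjesFunction_eq]
      exact rightLim_of_const_lt hGm hGa0 ht
    exact tendsto_const_nhds.congr' (hev.mono fun t h => h.symm)
  have hIica : lengthMeasure g (Iic a) = ENNReal.ofReal (hGm.stieltjesFunction a) := by
    rw [lengthMeasure_of_monotone hGm, StieltjesFunction.measure_Iic _ hFG_bot, sub_zero]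
  have hIoib : lengthMeasure g (Ioi b) = 0 := by
    rw [lengthMeasure_of_monotone hGm]
    have hcover : Ioi b = ⋃ n : ℕ, Ioc b (b + (n + 1)) := by
      ext x
      simp only [mem_Ioi, mem_iUnion, mem_Ioc]
      constructor
      · intro hx
        obtain ⟨n, hn⟩ := exists_nat_ge (x - b)
        exact ⟨n, hx, by linarith⟩
      · rintro ⟨n, hn, -⟩; exact hn
    rw [hcover]
    refine measure_iUnion_null fun n => ?_
    rw [StieltjesFunction.measure_Ioc]
    have e1 : (hGm.stieltjesFunction) (b + (n + 1)) = pathVar γ b - pathVar γ a :=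
      rightLim_of_const_ge hGm hGbL (le_add_of_nonneg_right (by positivity))
    have e2 : (hGm.stieltjesFunction) b = pathVar γ b - pathVar γ a :=
      rightLim_of_const_ge hGm hGbL le_rfl
    rw [e1, e2, sub_self, ENNReal.ofReal_zero]
  -- the singleton bound
  have hsingle : ENNReal.ofReal (hGm.stieltjesFunction a) ≤ lengthMeasure γ {a} := by
    rw [lengthMeasure_of_monotone hWm, StieltjesFunction.measure_singleton]
    apply ENNReal.ofReal_le_ofReal
    have hi : hGm.stieltjesFunction a + pathVar γ a ≤ rightLim (pathVar γ) a := by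
      refine ge_of_tendsto (hWm.tendsto_rightLim a) ?_
      filter_upwards [self_mem_nhdsWithin] with u hu
      have hu' : a < u := hu
      have h1' : rightLim (pathVar g) a ≤ pathVar g u := hGm.rightLim_le hu'
      have h2' : pathVar g u = pathVar γ (clampR a b u) - pathVar γ a := by
        rw [hgdef, pathVar_subPath γ h0 hab h1 hγ]
      have h3' : pathVar γ (clampR a b u) ≤ pathVar γ u := by
        apply hWm
        rw [clampR, max_eq_right hu'.le]
        exact min_le_right _ _
      have h4' : (hGm.stieltjesFunction) a = rightLim (pathVar g) a := rfl
      linarith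
    have hii : leftLim (hWm.stieltjesFunction) a ≤ pathVar γ a := by
      refine le_of_tendsto (hWm.stieltjesFunction.mono.tendsto_leftLim a) ?_
      filter_upwards [self_mem_nhdsWithin] with s hs
      have hs' : s < a := hs
      have h4' : (hWm.stieltjesFunction) s = rightLim (pathVar γ) s := rfl
      rw [h4']
      exact hWm.rightLim_le hs'
    have h5' : (hWm.stieltjesFunction) a = rightLim (pathVar γ) a := rfl
    linarith
  -- pointwise descriptions of the integrand
  have hconst : ∀ t ∈ Iic a, ρ (g (Set.projIcc 0 1 zero_le_one t)) = ρ (γ ⟨a, hmem_a⟩) := by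
    intro t ht
    have hproj : ((Set.projIcc 0 1 zero_le_one t : unitInterval) : ℝ) ≤ a := by
      show max 0 (min 1 t) ≤ a
      exact max_le h0 ((min_le_right 1 t).trans ht)
    rw [hgdef, subPath_apply, subσ_of_le h0 hab h1 hproj]
  have hfa : f a = ρ (γ ⟨a, hmem_a⟩) := by
    rw [hfdef]
    simp only
    rw [Set.projIcc_of_mem zero_le_one hmem_a]
  have hmid : ∀ t ∈ Ioc a b, ρ (g (Set.projIcc 0 1 zero_le_one t)) = f t := by
    intro t ht
    have htmem : t ∈ Icc (0:ℝ) 1 := ⟨h0.trans ht.1.le, ht.2.trans h1⟩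
    rw [hgdef, subPath_apply, Set.projIcc_of_mem zero_le_one htmem,
      subσ_of_mem h0 hab h1 ht.1.le ht.2, hfdef]
    simp only
    rw [Set.projIcc_of_mem zero_le_one htmem]
  -- now the computation
  have hsplit : pathIntegral ρ g =
      (∫⁻ t in Iic a, ρ (g (Set.projIcc 0 1 zero_le_one t)) ∂(lengthMeasure g)) +
      (∫⁻ t in Ioc a b, ρ (g (Set.projIcc 0 1 zero_le_one t)) ∂(lengthMeasure g)) := by
    rw [pathIntegral, ← lintegral_add_compl _ (measurableSet_Iic (a := b)), Set.compl_Iic,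
      setLIntegral_measure_zero _ _ hIoib, add_zero, ← Set.Iic_union_Ioc_eq_Iic hab,
      lintegral_union measurableSet_Ioc (Set.Iic_disjoint_Ioc le_rfl)]
  have hpart1 : (∫⁻ t in Iic a, ρ (g (Set.projIcc 0 1 zero_le_one t)) ∂(lengthMeasure g)) ≤
      ∫⁻ t in {a}, f t ∂(lengthMeasure γ) := by
    rw [setLIntegral_congr_fun measurableSet_Iic hconst, setLIntegral_const,
      lintegral_singleton, hfa, hIica]
    exact mul_le_mul_right hsingle _
  have hpart2 : (∫⁻ t in Ioc a b, ρ (g (Set.projIcc 0 1 zero_le_one t)) ∂(lengthMeasure g)) ≤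
      ∫⁻ t in Ioc a b, f t ∂(lengthMeasure γ) := by
    rw [setLIntegral_congr_fun measurableSet_Ioc hmid]
    exact lintegral_mono' (Measure.restrict_mono subset_rfl hμle) le_rfl
  rw [hsplit]
  calc _ ≤ (∫⁻ t in {a}, f t ∂(lengthMeasure γ)) + ∫⁻ t in Ioc a b, f t ∂(lengthMeasure γ) :=
        add_le_add hpart1 hpart2
    _ = ∫⁻ t in {a} ∪ Ioc a b, f t ∂(lengthMeasure γ) := by
        rw [lintegral_union measurableSet_Ioc (by
          simp only [Set.disjoint_singleton_left, mem_Ioc, not_and, not_le]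
          intro h; exact absurd h (lt_irrefl a))]
    _ ≤ ∫⁻ t, f t ∂(lengthMeasure γ) := setLIntegral_le_lintegral _ _
    _ = pathIntegral ρ γ := rfl

end SubPathIntegral

end BK
noncomputable section
namespace BK

open Metric Set MeasureTheory Filter Topology unitInterval Function
open scoped NNReal ENNReal

variable {Z : Type*} [MetricSpace Z] [MeasurableSpace Z] {Q : ℝ} {μ : Measure Z}

/-! ### Basic modulus lemmas -/

lemma admissible_anti {ρ : Z → ℝ≥0∞} {Γ Γ' : Set C(unitInterval, Z)} (h : Γ ⊆ Γ')
    (hA : Admissible ρ Γ') : Admissible ρ Γ := fun γ hγ => hA γ (h hγ)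

lemma modulus_le_energy {ρ : Z → ℝ≥0∞} {Γ : Set C(unitInterval, Z)} (hm : Measurable ρ)
    (hA : Admissible ρ Γ) : modulus Q μ Γ ≤ ∫⁻ z, ρ z ^ Q ∂μ := by
  rw [modulus]
  exact iInf_le_of_le ρ (iInf_le_of_le hm (iInf_le _ hA))

lemma modulus_mono {Γ Γ' : Set C(unitInterval, Z)} (h : Γ ⊆ Γ') :
    modulus Q μ Γ ≤ modulus Q μ Γ' := by
  conv_rhs => rw [modulus]
  refine le_iInf fun ρ => le_iInf fun hm => le_iInf fun hA => ?_
  exact modulus_le_energy hm (admissible_anti h hA)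

lemma exists_admissible_lt {Γ : Set C(unitInterval, Z)} {c : ℝ≥0∞} (h : modulus Q μ Γ < c) :
    ∃ ρ : Z → ℝ≥0∞, Measurable ρ ∧ Admissible ρ Γ ∧ ∫⁻ z, ρ z ^ Q ∂μ < c := by
  simp only [modulus, iInf_lt_iff] at h
  obtain ⟨ρ, hm, hA, hE⟩ := h
  exact ⟨ρ, hm, hA, hE⟩

lemma rpow_rpow_inv (hQ : 0 < Q) (x : ℝ≥0∞) : (x ^ Q) ^ (1/Q) = x := by
  rw [← ENNReal.rpow_mul, mul_one_div_cancel hQ.ne', ENNReal.rpow_one]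

lemma rpow_inv_rpow (hQ : 0 < Q) (x : ℝ≥0∞) : (x ^ (1/Q)) ^ Q = x := by
  rw [← ENNReal.rpow_mul, one_div_mul_cancel hQ.ne', ENNReal.rpow_one]

/-- Countable subadditivity of the modulus, in the special case of families of zero modulus. -/
lemma modulus_iUnion_null (hQ : 0 < Q) {ι : Type*} [Countable ι]
    (Γ : ι → Set C(unitInterval, Z)) (h : ∀ i, modulus Q μ (Γ i) = 0) :
    modulus Q μ (⋃ i, Γ i) = 0 := by
  refine le_antisymm ?_ zero_le
  refine ENNReal.le_of_forall_pos_le_add fun ε hε _ => ?_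
  rw [zero_add]
  obtain ⟨f, hf⟩ : ∃ f : ι → ℕ, Function.Injective f := Countable.exists_injective_nat ι
  have hδ : ∀ i : ι, (0:ℝ≥0∞) < (ε/2 : ℝ≥0∞) * (1/2) ^ (f i) := by
    intro i
    apply ENNReal.mul_pos
    · simp only [ne_eq, ENNReal.div_eq_zero_iff, ENNReal.coe_eq_zero, hε.ne', false_or]
      simp
    · exact (ENNReal.pow_pos (by norm_num) _).ne'
  have hsel : ∀ i : ι, ∃ ρ : Z → ℝ≥0∞, Measurable ρ ∧ Admissible ρ (Γ i) ∧
      ∫⁻ z, ρ z ^ Q ∂μ < (ε/2 : ℝ≥0∞) * (1/2) ^ (f i) := by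
    intro i
    exact exists_admissible_lt (by rw [h i]; exact hδ i)
  choose ρ hρm hρA hρE using hsel
  set R : Z → ℝ≥0∞ := fun z => (∑' i, ρ i z ^ Q) ^ (1/Q) with hR
  have hRm : Measurable R := (Measurable.ennreal_tsum fun i => (hρm i).pow_const Q).pow_const _
  have hle : ∀ i z, ρ i z ≤ R z := by
    intro i z
    rw [hR]
    calc ρ i z = (ρ i z ^ Q) ^ (1/Q) := (rpow_rpow_inv hQ _).symm
    _ ≤ _ := ENNReal.rpow_le_rpow (ENNReal.le_tsum i) (by positivity)
  have hRA : Admissible R (⋃ i, Γ i) := by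
    intro γ hγ hrect
    obtain ⟨i, hi⟩ := mem_iUnion.1 hγ
    calc (1:ℝ≥0∞) ≤ pathIntegral (ρ i) γ := hρA i γ hi hrect
    _ ≤ pathIntegral R γ := lintegral_mono fun t => hle i _
  calc modulus Q μ (⋃ i, Γ i) ≤ ∫⁻ z, R z ^ Q ∂μ := modulus_le_energy hRm hRA
  _ = ∫⁻ z, ∑' i, ρ i z ^ Q ∂μ := by
      congr 1; funext z; rw [hR, rpow_inv_rpow hQ]
  _ = ∑' i, ∫⁻ z, ρ i z ^ Q ∂μ := lintegral_tsum fun i => ((hρm i).pow_const Q).aemeasurable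
  _ ≤ ∑' i, (ε/2 : ℝ≥0∞) * (1/2) ^ (f i) := ENNReal.tsum_le_tsum fun i => (hρE i).le
  _ = (ε/2 : ℝ≥0∞) * ∑' i, (1/2 : ℝ≥0∞) ^ (f i) := ENNReal.tsum_mul_left
  _ ≤ (ε/2 : ℝ≥0∞) * ∑' n : ℕ, (1/2 : ℝ≥0∞) ^ n := by
      refine mul_le_mul_right (ENNReal.tsum_comp_le_tsum_of_injective hf _) _
  _ ≤ (ε : ℝ≥0∞) := by
      rw [ENNReal.tsum_geometric]
      have h2 : (1 - 1/2 : ℝ≥0∞)⁻¹ = 2 := by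
        rw [one_div, ENNReal.one_sub_inv_two, inv_inv]
      rw [h2, ENNReal.div_mul_cancel (by norm_num) (by norm_num)]

/-- Binary subadditivity of the modulus. -/
lemma modulus_union_le (hQ : 0 < Q) (Γ₁ Γ₂ : Set C(unitInterval, Z)) :
    modulus Q μ (Γ₁ ∪ Γ₂) ≤ modulus Q μ Γ₁ + modulus Q μ Γ₂ := by
  rcases eq_top_or_lt_top (modulus Q μ Γ₁) with h1 | h1
  · rw [h1, top_add]; exact le_top
  rcases eq_top_or_lt_top (modulus Q μ Γ₂) with h2 | h2
  · rw [h2, add_top]; exact le_top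
  refine ENNReal.le_of_forall_pos_le_add fun ε hε _ => ?_
  have hεpos : (0:ℝ≥0∞) < (ε/2 : ℝ≥0∞) := by
    simp only [ENNReal.div_pos_iff, ne_eq, ENNReal.coe_eq_zero, hε.ne', not_false_iff]
    exact ⟨by simpa using hε.ne', by norm_num⟩
  obtain ⟨ρ₁, hm₁, hA₁, hE₁⟩ := exists_admissible_lt
    (ENNReal.lt_add_right h1.ne hεpos.ne' : modulus Q μ Γ₁ < modulus Q μ Γ₁ + ε/2)
  obtain ⟨ρ₂, hm₂, hA₂, hE₂⟩ := exists_admissible_lt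
    (ENNReal.lt_add_right h2.ne hεpos.ne' : modulus Q μ Γ₂ < modulus Q μ Γ₂ + ε/2)
  set R : Z → ℝ≥0∞ := fun z => (ρ₁ z ^ Q + ρ₂ z ^ Q) ^ (1/Q) with hR
  have hRm : Measurable R := ((hm₁.pow_const Q).add (hm₂.pow_const Q)).pow_const _
  have hle1 : ∀ z, ρ₁ z ≤ R z := fun z => by
    rw [hR]
    calc ρ₁ z = (ρ₁ z ^ Q) ^ (1/Q) := (rpow_rpow_inv hQ _).symm
    _ ≤ _ := ENNReal.rpow_le_rpow le_self_add (by positivity)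
  have hle2 : ∀ z, ρ₂ z ≤ R z := fun z => by
    rw [hR]
    calc ρ₂ z = (ρ₂ z ^ Q) ^ (1/Q) := (rpow_rpow_inv hQ _).symm
    _ ≤ _ := ENNReal.rpow_le_rpow le_add_self (by positivity)
  have hRA : Admissible R (Γ₁ ∪ Γ₂) := by
    rintro γ (hγ | hγ) hrect
    · exact (hA₁ γ hγ hrect).trans (lintegral_mono fun t => hle1 _)
    · exact (hA₂ γ hγ hrect).trans (lintegral_mono fun t => hle2 _)
  calc modulus Q μ (Γ₁ ∪ Γ₂) ≤ ∫⁻ z, R z ^ Q ∂μ := modulus_le_energy hRm hRA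
  _ = ∫⁻ z, (ρ₁ z ^ Q + ρ₂ z ^ Q) ∂μ := by
      congr 1; funext z; rw [hR, rpow_inv_rpow hQ]
  _ = (∫⁻ z, ρ₁ z ^ Q ∂μ) + ∫⁻ z, ρ₂ z ^ Q ∂μ :=
      lintegral_add_left (hm₁.pow_const Q) _
  _ ≤ (modulus Q μ Γ₁ + ε/2) + (modulus Q μ Γ₂ + ε/2) := add_le_add hE₁.le hE₂.le
  _ = modulus Q μ Γ₁ + modulus Q μ Γ₂ + (ε/2 + ε/2) := by ring
  _ = modulus Q μ Γ₁ + modulus Q μ Γ₂ + ε := by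
      rw [ENNReal.add_halves]

end BK
noncomputable section
namespace BK

open Metric Set MeasureTheory Filter Topology unitInterval Function
open scoped NNReal ENNReal

variable {Z : Type*} [MetricSpace Z] [CompactSpace Z] [MeasurableSpace Z] {Q : ℝ}
  {μ : Measure Z}

/-- The family of nonconstant non-thick paths has zero modulus. -/
lemma modulus_nonthick_zero (hQ : 0 < Q) :
    modulus Q μ {γ : C(unitInterval, Z) | Nonconstant γ ∧ ¬ IsThick Q μ γ} = 0 := by
  set NT := {γ : C(unitInterval, Z) | Nonconstant γ ∧ ¬ IsThick Q μ γ} with hNT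
  have hsel : ∀ γ : ↥NT, ∃ ε : ℝ, 0 < ε ∧
      modulus Q μ {α | α ∈ Metric.ball (γ : C(unitInterval, Z)) ε ∧ Nonconstant α} = 0 := by
    rintro ⟨γ, hγnc, hγnt⟩
    rw [IsThick] at hγnt
    push_neg at hγnt
    obtain ⟨ε, hε, hmod⟩ := hγnt
    exact ⟨ε, hε, le_zero_iff.1 hmod⟩
  choose ε hε hmod using hsel
  obtain ⟨T, hTc, hTeq⟩ := TopologicalSpace.isOpen_iUnion_countable
    (fun γ : ↥NT => Metric.ball (γ : C(unitInterval, Z)) (ε γ)) (fun _ => isOpen_ball)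
  haveI := hTc.to_subtype
  have hcover : NT ⊆ ⋃ i : ↥T,
      {α | α ∈ Metric.ball (((i : ↥NT)) : C(unitInterval, Z)) (ε i) ∧ Nonconstant α} := by
    intro γ hγ
    have hmem : γ ∈ ⋃ i : ↥NT, Metric.ball (i : C(unitInterval, Z)) (ε i) := by
      exact mem_iUnion.2 ⟨⟨γ, hγ⟩, mem_ball_self (hε _)⟩
    rw [← hTeq] at hmem
    simp only [mem_iUnion] at hmem
    obtain ⟨i, hiT, hib⟩ := hmem
    exact mem_iUnion.2 ⟨⟨i, hiT⟩, hib, hγ.1⟩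
  refine le_antisymm ?_ zero_le
  calc modulus Q μ NT ≤ _ := modulus_mono hcover
  _ = 0 := modulus_iUnion_null hQ _ fun i => hmod i

/-- Any family of nonconstant paths of positive modulus contains a thick path. -/
lemma exists_thick (hQ : 0 < Q) {Γ : Set C(unitInterval, Z)} (hnc : ∀ γ ∈ Γ, Nonconstant γ)
    (hpos : 0 < modulus Q μ Γ) : ∃ γ ∈ Γ, IsThick Q μ γ := by
  by_contra hcon
  push_neg at hcon
  have hsub : Γ ⊆ {γ | Nonconstant γ ∧ ¬ IsThick Q μ γ} := fun γ hγ => ⟨hnc γ hγ, hcon γ hγ⟩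
  have := (modulus_mono (μ := μ) hsub).trans_eq (modulus_nonthick_zero hQ)
  exact absurd this (by simpa using hpos.ne')

/-- Near a thick path, the *thick* nonconstant paths still form a family of positive modulus. -/
lemma modulus_thickball_pos (hQ : 0 < Q) {γ : C(unitInterval, Z)} (hth : IsThick Q μ γ)
    {ε : ℝ} (hε : 0 < ε) :
    0 < modulus Q μ {α | α ∈ Metric.ball γ ε ∧ Nonconstant α ∧ IsThick Q μ α} := by
  have h1 := hth ε hε
  have hsub : {α | α ∈ Metric.ball γ ε ∧ Nonconstant α} ⊆
      {α | α ∈ Metric.ball γ ε ∧ Nonconstant α ∧ IsThick Q μ α} ∪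
      {α | Nonconstant α ∧ ¬ IsThick Q μ α} := by
    rintro α ⟨ha, hb⟩
    by_cases h3 : IsThick Q μ α
    · exact Or.inl ⟨ha, hb, h3⟩
    · exact Or.inr ⟨hb, h3⟩
  have h2 := (modulus_mono (μ := μ) hsub).trans
    ((modulus_union_le hQ _ _).trans_eq (by rw [modulus_nonthick_zero hQ, add_zero]))
  exact h1.trans_le h2

set_option maxHeartbeats 1000000 in
/-- A subpath (with distinct endpoints) of a thick path is thick. -/
lemma isThick_subPath (hQ : 0 < Q) {γ : C(unitInterval, Z)} (hth : IsThick Q μ γ) {a b : ℝ}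
    (h0 : 0 ≤ a) (hab : a ≤ b) (h1 : b ≤ 1)
    (hne : γ ⟨a, h0, hab.trans h1⟩ ≠ γ ⟨b, h0.trans hab, h1⟩) :
    IsThick Q μ (subPath γ h0 hab h1) := by
  intro ε hε
  set d := dist (γ ⟨a, h0, hab.trans h1⟩) (γ ⟨b, h0.trans hab, h1⟩) with hd
  have hdpos : 0 < d := dist_pos.2 hne
  set ε' : ℝ := min ε (d/3) with hε'def
  have hε' : 0 < ε' := lt_min hε (by positivity)
  refine lt_of_lt_of_le (hth ε' hε') ?_
  conv_rhs => rw [modulus]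
  refine le_iInf fun ρ => le_iInf fun hm => le_iInf fun hA => ?_
  refine modulus_le_energy hm ?_
  rintro β ⟨hball, hnc⟩ hrect
  have hrect' : pathLength β ≠ ⊤ := hrect.ne
  have hdistβγ : dist β γ < ε' := mem_ball.1 hball
  have happle : ∀ u : unitInterval, dist (β u) (γ u) < ε' :=
    fun u => lt_of_le_of_lt (ContinuousMap.dist_apply_le_dist u) hdistβγ
  have hsubmem : subPath β h0 hab h1 ∈
      {α | α ∈ Metric.ball (subPath γ h0 hab h1) ε ∧ Nonconstant α} := by
    constructor
    · rw [mem_ball]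
      have hle : dist (subPath β h0 hab h1) (subPath γ h0 hab h1) ≤ dist β γ :=
        (ContinuousMap.dist_le dist_nonneg).2 fun u =>
          ContinuousMap.dist_apply_le_dist (f := β) (g := γ) (subσ h0 hab h1 u)
      calc dist (subPath β h0 hab h1) (subPath γ h0 hab h1) ≤ dist β γ := hle
      _ < ε' := hdistβγ
      _ ≤ ε := min_le_left _ _
    · refine ⟨0, 1, ?_⟩
      rw [subPath_zero, subPath_one]
      intro heq
      have hd1 : dist (β ⟨a, h0, hab.trans h1⟩) (γ ⟨a, h0, hab.trans h1⟩) < ε' := happle _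
      have hd2 : dist (β ⟨b, h0.trans hab, h1⟩) (γ ⟨b, h0.trans hab, h1⟩) < ε' := happle _
      have htri : d ≤ dist (γ ⟨a, h0, hab.trans h1⟩) (β ⟨a, h0, hab.trans h1⟩) +
          dist (β ⟨b, h0.trans hab, h1⟩) (γ ⟨b, h0.trans hab, h1⟩) := by
        rw [hd]
        calc dist (γ ⟨a, h0, hab.trans h1⟩) (γ ⟨b, h0.trans hab, h1⟩) ≤
            dist (γ ⟨a, h0, hab.trans h1⟩) (β ⟨a, h0, hab.trans h1⟩) +
            dist (β ⟨a, h0, hab.trans h1⟩) (γ ⟨b, h0.trans hab, h1⟩) := dist_triangle _ _ _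
        _ = dist (γ ⟨a, h0, hab.trans h1⟩) (β ⟨a, h0, hab.trans h1⟩) +
            dist (β ⟨b, h0.trans hab, h1⟩) (γ ⟨b, h0.trans hab, h1⟩) := by rw [heq]
      rw [dist_comm] at htri
      have : ε' ≤ d/3 := min_le_right _ _
      linarith
  have hint : (1:ℝ≥0∞) ≤ pathIntegral ρ (subPath β h0 hab h1) :=
    hA _ hsubmem ((pathLength_subPath_le β h0 hab h1).trans_lt hrect)
  exact hint.trans (pathIntegral_subPath_le β h0 hab h1 hrect' ρ)

end BK
noncomputable section
namespace BK

open Metric Set MeasureTheory Filter Topology unitInterval Function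
open scoped NNReal ENNReal

variable {Z : Type*} [MetricSpace Z] [CompactSpace Z] [MeasurableSpace Z] {Q : ℝ}
  {μ : Measure Z}

lemma pathVar_nonpos (γ : C(unitInterval, Z)) {t : ℝ} (ht : t ≤ 0) : pathVar γ t = 0 := by
  rcases lt_or_eq_of_le ht with h | h
  · exact pathVar_of_neg γ h
  · subst h
    rw [pathVar_of_nonneg γ le_rfl]
    have : Set.projIcc (0:ℝ) 1 zero_le_one 0 = (0 : unitInterval) := by
      apply Subtype.ext
      show max 0 (min 1 0) = 0
      rw [min_eq_right zero_le_one, max_self]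
    rw [this, Set.Icc_self, eVariationOn.subsingleton γ subsingleton_singleton]
    simp

/-- The arclength measure of `Iic t` is at least the distance travelled up to time `t`. -/
lemma lengthMeasure_Iic_ge (α : C(unitInterval, Z)) (hrect : pathLength α ≠ ⊤) {t : ℝ}
    (ht : 0 ≤ t) (ht1 : t ≤ 1) :
    ENNReal.ofReal (dist (α 0) (α (Set.projIcc 0 1 zero_le_one t))) ≤
      lengthMeasure α (Iic t) := by
  have hm : Monotone (pathVar α) := pathVar_mono α hrect
  have hbot : Tendsto (hm.stieltjesFunction) atBot (𝓝 0) := by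
    have hev : ∀ᶠ s in atBot, (hm.stieltjesFunction) s = 0 := by
      filter_upwards [eventually_lt_atBot (0:ℝ)] with s hs
      exact rightLim_of_const_lt hm (fun t' ht' => pathVar_nonpos α ht') hs
    exact tendsto_const_nhds.congr' (hev.mono fun s h => h.symm)
  rw [lengthMeasure_of_monotone hm, StieltjesFunction.measure_Iic _ hbot, sub_zero]
  apply ENNReal.ofReal_le_ofReal
  have h1 : pathVar α t ≤ (hm.stieltjesFunction) t := hm.le_rightLim le_rfl
  have h2 : dist (α 0) (α (Set.projIcc 0 1 zero_le_one t)) ≤ pathVar α t := by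
    rw [pathVar_of_nonneg α ht, dist_edist]
    have hle := eVariationOn.edist_le (f := ((α : C(unitInterval,Z)) : unitInterval → Z))
      (s := Icc 0 (Set.projIcc 0 1 zero_le_one t)) (x := (0:unitInterval))
      (y := Set.projIcc 0 1 zero_le_one t)
      ⟨le_rfl, unitInterval.nonneg'⟩ ⟨unitInterval.nonneg', le_rfl⟩
    refine ENNReal.toReal_mono ?_ hle
    exact (lt_of_le_of_lt (eVariationOn_le_pathLength α _) (lt_top_iff_ne_top.2 hrect)).ne
  linarith

/-- Key lemma: the set of initial points (in a suitable ball) of thick paths joining two balls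
around the endpoints of a thick path has positive measure. -/
lemma measure_thick_endpoints_pos (hQ : 0 < Q) {γ₁ : C(unitInterval, Z)}
    (hth : IsThick Q μ γ₁) (hne : γ₁ 0 ≠ γ₁ 1) :
    0 < μ {w ∈ Metric.ball (γ₁ 0) (dist (γ₁ 0) (γ₁ 1) / 4) | ∃ γ' : C(unitInterval, Z),
      IsThick Q μ γ' ∧ γ' 0 = w ∧ γ' 1 ∈ Metric.ball (γ₁ 1) (dist (γ₁ 0) (γ₁ 1) / 4)} := by
  set p := γ₁ 0 with hp
  set q := γ₁ 1 with hq
  set d := dist p q with hd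
  have hdpos : 0 < d := dist_pos.2 hne
  set r := d / 4 with hr
  have hrpos : 0 < r := by positivity
  set S := {w ∈ Metric.ball p r | ∃ γ' : C(unitInterval, Z),
      IsThick Q μ γ' ∧ γ' 0 = w ∧ γ' 1 ∈ Metric.ball q r} with hS
  by_contra hzero
  have hSzero : μ S = 0 := by simpa using (not_lt.1 hzero)
  have hS''zero : μ (toMeasurable μ S) = 0 := by rw [measure_toMeasurable]; exact hSzero
  have hS''meas : MeasurableSet (toMeasurable μ S) := measurableSet_toMeasurable μ S
  set ρ : Z → ℝ≥0∞ := (toMeasurable μ S).indicator (fun _ => (⊤:ℝ≥0∞)) with hρ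
  have hρm : Measurable ρ := measurable_const.indicator hS''meas
  have hpos := modulus_thickball_pos hQ hth (half_pos hrpos)
  have hEnergy : ∫⁻ z, ρ z ^ Q ∂μ = 0 := by
    have hpt : ∀ z, ρ z ^ Q = ρ z := by
      intro z
      by_cases hz : z ∈ toMeasurable μ S
      · have h' : ρ z = ⊤ := by rw [hρ]; exact Set.indicator_of_mem hz _
        rw [h', ENNReal.top_rpow_of_pos hQ]
      · have h' : ρ z = 0 := by rw [hρ]; exact Set.indicator_of_notMem hz _
        rw [h', ENNReal.zero_rpow_of_pos hQ]
    calc ∫⁻ z, ρ z ^ Q ∂μ = ∫⁻ z, ρ z ∂μ := by simp_rw [hpt]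
    _ = ∫⁻ z in toMeasurable μ S, ⊤ ∂μ := by rw [hρ]; exact lintegral_indicator hS''meas _
    _ = ⊤ * μ (toMeasurable μ S) := setLIntegral_const _ _
    _ = 0 := by rw [hS''zero, mul_zero]
  have hAdm : Admissible ρ {α | α ∈ Metric.ball γ₁ (r/2) ∧ Nonconstant α ∧ IsThick Q μ α} := by
    rintro α ⟨hαball, hαnc, hαth⟩ hrect
    have hα0 : dist (α 0) p < r / 2 :=
      lt_of_le_of_lt (ContinuousMap.dist_apply_le_dist (f := α) (g := γ₁) 0) (mem_ball.1 hαball)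
    have hα1 : dist (α 1) q < r / 2 :=
      lt_of_le_of_lt (ContinuousMap.dist_apply_le_dist (f := α) (g := γ₁) 1) (mem_ball.1 hαball)
    have hα1p : 3 * r < dist (α 1) p := by
      have htri : d ≤ dist p (α 1) + dist (α 1) q := dist_triangle _ _ _
      rw [dist_comm] at htri
      have : d = 4 * r := by rw [hr]; ring
      linarith
    -- the function measuring distance from p along α
    set h : ℝ → ℝ := fun t => dist (α (Set.projIcc 0 1 zero_le_one t)) p with hh
    have hhcont : Continuous h := (α.continuous.comp continuous_projIcc).dist continuous_const
    set A := {t : ℝ | t ∈ Icc (0:ℝ) 1 ∧ 3 * r / 4 ≤ h t} with hA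
    have hAclosed : IsClosed A := by
      apply IsClosed.inter isClosed_Icc
      exact isClosed_le continuous_const hhcont
    have h1A : (1:ℝ) ∈ A := by
      refine ⟨⟨zero_le_one, le_rfl⟩, ?_⟩
      have : Set.projIcc (0:ℝ) 1 zero_le_one 1 = (1 : unitInterval) := by
        apply Subtype.ext
        show max 0 (min 1 1) = 1
        rw [min_self, max_eq_right zero_le_one]
      rw [hh]
      simp only
      rw [this]
      linarith
    have hAbdd : BddBelow A := ⟨0, fun x hx => hx.1.1⟩
    set u := sInf A with hu
    have huA : u ∈ A := IsClosed.csInf_mem hAclosed ⟨1, h1A⟩ hAbdd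
    have hu0 : 0 ≤ u := huA.1.1
    have hu1 : u ≤ 1 := huA.1.2
    have hupos : 0 < u := by
      rcases lt_or_eq_of_le hu0 with h' | h'
      · exact h'
      · exfalso
        have h0A : (0:ℝ) ∈ A := h' ▸ huA
        have : Set.projIcc (0:ℝ) 1 zero_le_one 0 = (0 : unitInterval) := by
          apply Subtype.ext
          show max 0 (min 1 0) = 0
          rw [min_eq_right zero_le_one, max_self]
        have := h0A.2
        rw [hh] at this
        simp only at this
        rw [‹Set.projIcc (0:ℝ) 1 zero_le_one 0 = (0 : unitInterval)›] at this
        have : (3:ℝ) * r / 4 ≤ dist (α 0) p := this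
        linarith
    have hbelow : ∀ t : ℝ, 0 ≤ t → t < u → h t < 3 * r / 4 := by
      intro t ht0 htu
      by_contra hcon
      push_neg at hcon
      have : t ∈ A := ⟨⟨ht0, htu.le.trans hu1⟩, hcon⟩
      exact absurd (csInf_le hAbdd this) (not_le.2 htu)
    -- choose tc slightly below u
    obtain ⟨δ, hδpos, hδ⟩ := Metric.continuousAt_iff.1 (hhcont.continuousAt (x := u)) (r/8) (by positivity)
    set tc := max (u/2) (u - δ/2) with htc
    have htcu : tc < u := by
      apply max_lt
      · linarith
      · linarith
    have htc0 : 0 ≤ tc := le_max_of_le_left (by linarith)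
    have htc1 : tc ≤ 1 := htcu.le.trans hu1
    have htcδ : dist tc u < δ := by
      rw [Real.dist_eq, abs_lt]
      constructor
      · have : u - δ/2 ≤ tc := le_max_right _ _
        linarith
      · linarith
    have hhtc : 5 * r / 8 < h tc := by
      have := hδ htcδ
      rw [Real.dist_eq, abs_lt] at this
      have huval : 3 * r / 4 ≤ h u := huA.2
      linarith [this.1]
    -- every point of α before tc lies in S
    have hmemS : ∀ t : ℝ, t ≤ tc → α (Set.projIcc 0 1 zero_le_one t) ∈ S := by
      intro t ht
      set t' := Set.projIcc 0 1 zero_le_one t with ht'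
      have ht'le : (t' : ℝ) ≤ tc := by
        have hmono := monotone_projIcc (zero_le_one : (0:ℝ) ≤ 1) ht
        have : (t' : ℝ) ≤ (Set.projIcc 0 1 zero_le_one tc : ℝ) := hmono
        rwa [Set.projIcc_of_mem zero_le_one ⟨htc0, htc1⟩] at this
      have ht'u : (t' : ℝ) < u := lt_of_le_of_lt ht'le htcu
      have hdist : dist (α t') p < 3 * r / 4 := by
        have := hbelow (t' : ℝ) t'.2.1 ht'u
        rw [hh] at this
        simp only at this
        rwa [Set.projIcc_val zero_le_one t'] at this
      have hwball : α t' ∈ Metric.ball p r := mem_ball.2 (hdist.trans (by linarith))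
      -- the subpath from t' to 1 is thick
      have hne' : α ⟨(t' : ℝ), t'.2⟩ ≠ α ⟨1, zero_le_one, le_rfl⟩ := by
        intro heq
        have e1 : (⟨(t' : ℝ), t'.2⟩ : unitInterval) = t' := Subtype.ext rfl
        have e2 : (⟨1, zero_le_one, le_rfl⟩ : unitInterval) = 1 := Subtype.ext rfl
        rw [e1, e2] at heq
        rw [heq] at hdist
        linarith
      have hth' : IsThick Q μ (subPath α t'.2.1 t'.2.2 le_rfl) :=
        isThick_subPath hQ hαth t'.2.1 t'.2.2 le_rfl hne'
      refine ⟨hwball, subPath α t'.2.1 t'.2.2 le_rfl, hth', ?_, ?_⟩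
      · rw [subPath_zero]
      · rw [subPath_one]
        have : α (⟨1, t'.2.1.trans t'.2.2, le_rfl⟩ : unitInterval) = α 1 := by
          congr 1
        rw [this]
        exact mem_ball.2 (hα1.trans (by linarith))
    -- the integral is infinite
    have hlow : ENNReal.ofReal (r/8) ≤ lengthMeasure α (Iic tc) := by
      refine le_trans ?_ (lengthMeasure_Iic_ge α hrect.ne htc0 htc1)
      apply ENNReal.ofReal_le_ofReal
      have htri : h tc ≤ dist (α 0) (α (Set.projIcc 0 1 zero_le_one tc)) + dist (α 0) p := by
        rw [hh]
        simp only
        calc dist (α (Set.projIcc 0 1 zero_le_one tc)) p ≤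
            dist (α (Set.projIcc 0 1 zero_le_one tc)) (α 0) + dist (α 0) p := dist_triangle _ _ _
        _ = _ := by rw [dist_comm (α (Set.projIcc 0 1 zero_le_one tc)) (α 0)]
      linarith
    have hint : (1:ℝ≥0∞) ≤ pathIntegral ρ α := by
      have hup : (⊤:ℝ≥0∞) * lengthMeasure α (Iic tc) ≤ pathIntegral ρ α := by
        calc (⊤:ℝ≥0∞) * lengthMeasure α (Iic tc) = ∫⁻ t in Iic tc, ⊤ ∂(lengthMeasure α) :=
              (setLIntegral_const _ _).symm
        _ = ∫⁻ t in Iic tc, ρ (α (Set.projIcc 0 1 zero_le_one t)) ∂(lengthMeasure α) := by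
              refine setLIntegral_congr_fun measurableSet_Iic (fun t ht => ?_)
              rw [hρ, Set.indicator_of_mem (subset_toMeasurable μ S (hmemS t ht))]
        _ ≤ ∫⁻ t, ρ (α (Set.projIcc 0 1 zero_le_one t)) ∂(lengthMeasure α) :=
              setLIntegral_le_lintegral _ _
        _ = pathIntegral ρ α := rfl
      have hmeaspos : lengthMeasure α (Iic tc) ≠ 0 := by
        intro hzero'
        rw [hzero'] at hlow
        simp only [le_zero_iff, ENNReal.ofReal_eq_zero] at hlow
        linarith
      calc (1:ℝ≥0∞) ≤ ⊤ := le_top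
      _ = (⊤:ℝ≥0∞) * lengthMeasure α (Iic tc) := (ENNReal.top_mul hmeaspos).symm
      _ ≤ pathIntegral ρ α := hup
    exact hint
  have := (modulus_le_energy hρm hAdm).trans_eq hEnergy
  exact absurd this (by simpa using hpos.ne')

end BK
noncomputable section
namespace BK

open Metric Set MeasureTheory Filter Topology unitInterval Function
open scoped NNReal ENNReal

section Density

variable {Z : Type*} [MetricSpace Z] [CompactSpace Z] [MeasurableSpace Z] [BorelSpace Z]
  {Q : ℝ} {μ : Measure Z}

/-- ENNReal helper : `(B - X)/B = 1 - X/B`. -/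
lemma ennreal_sub_div {B X : ℝ≥0∞} (hB0 : B ≠ 0) (hBt : B ≠ ⊤) :
    (B - X) / B = 1 - X / B := by
  rcases le_total X B with h | h
  · have hXt : X ≠ ⊤ := (h.trans_lt (lt_top_iff_ne_top.2 hBt)).ne
    have hsum : (B - X) / B + X / B = 1 := by
      rw [ENNReal.div_add_div_same, tsub_add_cancel_of_le h, ENNReal.div_self hB0 hBt]
    have hfin : X / B ≠ ⊤ := by
      simp only [ne_eq, ENNReal.div_eq_top, not_or, not_and_or]
      exact ⟨Or.inr hB0, Or.inl hXt⟩
    exact ENNReal.eq_sub_of_add_eq hfin hsum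
  · rw [tsub_eq_zero_of_le h, ENNReal.zero_div, eq_comm, tsub_eq_zero_iff_le]
    calc (1:ℝ≥0∞) = B / B := (ENNReal.div_self hB0 hBt).symm
    _ ≤ X / B := ENNReal.div_le_div_right h _

/-- ENNReal helper for the lower density bound. -/
lemma ennreal_density_lower {B Bc a ac x K : ℝ≥0∞}
    (hB0 : B ≠ 0) (hBct : Bc ≠ ⊤) (hBBc : B ≤ Bc)
    (hsum : ac + x = Bc) (hBle : B ≤ a + x) (hK : Bc ≤ K * B) :
    1 - K * (1 - ac / Bc) ≤ a / B := by
  have hBt : B ≠ ⊤ := (hBBc.trans_lt (lt_top_iff_ne_top.2 hBct)).ne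
  have hBc0 : Bc ≠ 0 := by
    intro h
    exact hB0 (le_antisymm (h ▸ hBBc) zero_le)
  have hxBc : x ≤ Bc := le_add_self.trans hsum.le
  have hxt : x ≠ ⊤ := (hxBc.trans_lt (lt_top_iff_ne_top.2 hBct)).ne
  have hact : ac ≠ ⊤ := ((le_self_add.trans hsum.le).trans_lt (lt_top_iff_ne_top.2 hBct)).ne
  have h1g : 1 - ac / Bc = x / Bc := by
    have hs : x / Bc + ac / Bc = 1 := by
      rw [ENNReal.div_add_div_same, add_comm x ac, hsum, ENNReal.div_self hBc0 hBct]
    have hfin : ac / Bc ≠ ⊤ := by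
      simp only [ne_eq, ENNReal.div_eq_top, not_or, not_and_or]
      exact ⟨Or.inr hBc0, Or.inl hact⟩
    exact (ENNReal.eq_sub_of_add_eq hfin hs).symm
  rw [h1g]
  have hx_le : x / B ≤ K * (x / Bc) := by
    rw [← mul_div_assoc]
    rw [ENNReal.le_div_iff_mul_le (Or.inl hBc0) (Or.inl hBct)]
    calc x / B * Bc ≤ x / B * (K * B) := mul_le_mul_right hK _
    _ = K * x * (B⁻¹ * B) := by rw [div_eq_mul_inv]; ring
    _ = K * x := by rw [ENNReal.inv_mul_cancel hB0 hBt, mul_one]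
  calc 1 - K * (x / Bc) ≤ 1 - x / B := tsub_le_tsub_left hx_le 1
  _ = (B - x) / B := (ennreal_sub_div hB0 hBt).symm
  _ ≤ a / B := ENNReal.div_le_div_right (tsub_le_iff_right.2 hBle) B

/-- The total measure of a compact Ahlfors-regular space is finite. -/
lemma ahlfors_finite (hreg : AhlforsRegular μ Q)
    (hD : 0 < EMetric.diam (univ : Set Z)) : μ (univ : Set Z) < ⊤ := by
  obtain ⟨C, hC1, hC⟩ := hreg
  have hDnt : EMetric.diam (univ : Set Z) ≠ ⊤ :=
    (isCompact_univ.isBounded).ediam_ne_top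
  set D := (EMetric.diam (univ : Set Z)).toReal with hDdef
  have hDpos : 0 < D := ENNReal.toReal_pos hD.ne' hDnt
  have hcov : (univ : Set Z) ⊆ ⋃ z : Z, Metric.ball z (D/2) := by
    intro z _
    exact mem_iUnion.2 ⟨z, mem_ball_self (by positivity)⟩
  obtain ⟨t, ht⟩ := isCompact_univ.elim_finite_subcover (fun z : Z => Metric.ball z (D/2))
    (fun _ => isOpen_ball) hcov
  have hball : ∀ z : Z, μ (Metric.ball z (D/2)) ≤ C * ENNReal.ofReal ((D/2) ^ Q) := by
    intro z
    refine (hC z (D/2) (by positivity) ?_).2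
    calc ENNReal.ofReal (D/2) ≤ ENNReal.ofReal D := ENNReal.ofReal_le_ofReal (by linarith)
    _ = EMetric.diam (univ : Set Z) := ENNReal.ofReal_toReal hDnt
  calc μ (univ : Set Z) ≤ μ (⋃ z ∈ t, Metric.ball z (D/2)) := measure_mono ht
  _ ≤ ∑ z ∈ t, μ (Metric.ball z (D/2)) := measure_biUnion_finset_le t _
  _ ≤ ∑ z ∈ t, (C * ENNReal.ofReal ((D/2) ^ Q)) := Finset.sum_le_sum fun z _ => hball z
  _ < ⊤ := by
      apply ENNReal.sum_lt_top.2
      intro z _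
      exact ENNReal.mul_lt_top ENNReal.coe_lt_top ENNReal.ofReal_lt_top

/-- Positivity of the measure of balls. -/
lemma ahlfors_ball_pos (hreg : AhlforsRegular μ Q) (z : Z) {s : ℝ} (hs : 0 < s)
    (hsD : ENNReal.ofReal s ≤ EMetric.diam (univ : Set Z)) : 0 < μ (Metric.ball z s) := by
  obtain ⟨C, hC1, hC⟩ := hreg
  refine lt_of_lt_of_le ?_ (hC z s hs hsD).1
  apply ENNReal.div_pos
  · simp only [ne_eq, ENNReal.ofReal_eq_zero, not_le]
    positivity
  · exact ENNReal.coe_ne_top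

/-- A compact Ahlfors regular space carries a uniformly locally doubling measure. -/
lemma ahlfors_doubling (hreg : AhlforsRegular μ Q) (hQ : 0 < Q)
    (hD : 0 < EMetric.diam (univ : Set Z)) : IsUnifLocDoublingMeasure μ := by
  obtain ⟨C, hC1, hC⟩ := hreg
  have hDnt : EMetric.diam (univ : Set Z) ≠ ⊤ := (isCompact_univ.isBounded).ediam_ne_top
  set D := (EMetric.diam (univ : Set Z)).toReal with hDdef
  have hDpos : 0 < D := ENNReal.toReal_pos hD.ne' hDnt
  constructor
  refine ⟨C * C * ENNReal.ofReal ((3:ℝ) ^ Q) |>.toNNReal, ?_⟩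
  have hKt : (C : ℝ≥0∞) * C * ENNReal.ofReal ((3:ℝ) ^ Q) ≠ ⊤ :=
    (ENNReal.mul_lt_top (ENNReal.mul_lt_top ENNReal.coe_lt_top ENNReal.coe_lt_top)
      ENNReal.ofReal_lt_top).ne
  have hKval : (((C : ℝ≥0∞) * C * ENNReal.ofReal ((3:ℝ) ^ Q)).toNNReal : ℝ≥0∞) =
      (C : ℝ≥0∞) * C * ENNReal.ofReal ((3:ℝ) ^ Q) := ENNReal.coe_toNNReal hKt
  filter_upwards [Ioo_mem_nhdsGT_of_mem (⟨le_rfl, by positivity⟩ : (0:ℝ) ∈ Ico 0 (D/4))]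
    with ε hε x
  have hε0 : 0 < ε := hε.1
  have hεD : ε < D / 4 := hε.2
  have h3D : ENNReal.ofReal (3 * ε) ≤ EMetric.diam (univ : Set Z) := by
    calc ENNReal.ofReal (3 * ε) ≤ ENNReal.ofReal D := ENNReal.ofReal_le_ofReal (by linarith)
    _ = _ := ENNReal.ofReal_toReal hDnt
  have hεDle : ENNReal.ofReal ε ≤ EMetric.diam (univ : Set Z) := by
    calc ENNReal.ofReal ε ≤ ENNReal.ofReal D := ENNReal.ofReal_le_ofReal (by linarith)
    _ = _ := ENNReal.ofReal_toReal hDnt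
  have step1 : μ (closedBall x (2 * ε)) ≤ μ (Metric.ball x (3 * ε)) :=
    measure_mono (Metric.closedBall_subset_ball (by linarith))
  have step2 : μ (Metric.ball x (3 * ε)) ≤ C * ENNReal.ofReal ((3 * ε) ^ Q) :=
    (hC x (3 * ε) (by linarith) h3D).2
  have step3 : ENNReal.ofReal ((3 * ε) ^ Q) =
      ENNReal.ofReal ((3:ℝ) ^ Q) * ENNReal.ofReal (ε ^ Q) := by
    rw [Real.mul_rpow (by norm_num) hε0.le, ENNReal.ofReal_mul (by positivity)]
  have step4 : ENNReal.ofReal (ε ^ Q) ≤ C * μ (Metric.ball x ε) := by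
    have h := (hC x ε hε0 hεDle).1
    calc ENNReal.ofReal (ε ^ Q) = C * (ENNReal.ofReal (ε ^ Q) / C) :=
          (ENNReal.mul_div_cancel (by simpa using (lt_of_lt_of_le zero_lt_one hC1).ne')
            ENNReal.coe_ne_top).symm
    _ ≤ C * μ (Metric.ball x ε) := mul_le_mul_right h _
  have step5 : μ (Metric.ball x ε) ≤ μ (closedBall x ε) := measure_mono ball_subset_closedBall
  rw [hKval]
  calc μ (closedBall x (2 * ε)) ≤ C * (ENNReal.ofReal ((3:ℝ) ^ Q) * ENNReal.ofReal (ε ^ Q)) := by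
        rw [← step3]; exact step1.trans step2
  _ ≤ C * (ENNReal.ofReal ((3:ℝ) ^ Q) * (C * μ (closedBall x ε))) := by
        refine mul_le_mul_right (mul_le_mul_right (step4.trans ?_) _) _
        exact mul_le_mul_right step5 _
  _ = (C : ℝ≥0∞) * C * ENNReal.ofReal ((3:ℝ) ^ Q) * μ (closedBall x ε) := by ring

/-- The density point lemma : a set of positive measure contained in a ball has a
density point (with respect to open balls). -/
lemma exists_density_point (hreg : AhlforsRegular μ Q) (hQ : 0 < Q)
    (hD : 0 < EMetric.diam (univ : Set Z)) {S : Set Z} {x₀ : Z} {R : ℝ}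
    (hSsub : S ⊆ Metric.ball x₀ R) (hSpos : 0 < μ S) :
    ∃ z ∈ Metric.ball x₀ R,
      Tendsto (fun r : ℝ => μ (S ∩ Metric.ball z r) / μ (Metric.ball z r))
        (𝓝[>] (0:ℝ)) (𝓝 1) := by
  haveI hfin : IsFiniteMeasure μ := ⟨ahlfors_finite hreg hD⟩
  haveI hdbl : IsUnifLocDoublingMeasure μ := ahlfors_doubling hreg hQ hD
  have hDnt : EMetric.diam (univ : Set Z) ≠ ⊤ := (isCompact_univ.isBounded).ediam_ne_top
  set D := (EMetric.diam (univ : Set Z)).toReal with hDdef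
  have hDpos : 0 < D := ENNReal.toReal_pos hD.ne' hDnt
  obtain ⟨C, hC1, hC⟩ := hreg
  have hCne : (C:ℝ≥0∞) ≠ 0 := by simpa using (lt_of_lt_of_le zero_lt_one hC1).ne'
  -- a.e. point of S is a density point for closed balls
  have hae := IsUnifLocDoublingMeasure.ae_tendsto_measure_inter_div μ S 1
  have haeball : ∀ᵐ z ∂(μ.restrict S), z ∈ Metric.ball x₀ R := by
    rw [ae_iff]
    have hset : {z | ¬ z ∈ Metric.ball x₀ R} = (Metric.ball x₀ R)ᶜ := rfl
    rw [hset, Measure.restrict_apply measurableSet_ball.compl]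
    have : (Metric.ball x₀ R)ᶜ ∩ S = ∅ := by
      ext z
      simp only [mem_inter_iff, mem_compl_iff, mem_empty_iff_false, iff_false, not_and]
      intro hz hzS
      exact hz (hSsub hzS)
    rw [this, measure_empty]
  haveI hne : (ae (μ.restrict S)).NeBot := by
    rw [ae_neBot]
    intro h
    have h2 : μ.restrict S univ = 0 := by rw [h]; rfl
    rw [Measure.restrict_apply_univ] at h2
    exact absurd h2 hSpos.ne'
  obtain ⟨z, hzball, hzdens⟩ := (haeball.and hae).exists
  refine ⟨z, hzball, ?_⟩
  have hcb : Tendsto (fun r : ℝ => μ (S ∩ closedBall z r) / μ (closedBall z r))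
      (𝓝[>] (0:ℝ)) (𝓝 1) := by
    refine hzdens (fun _ => z) id tendsto_id ?_
    filter_upwards [self_mem_nhdsWithin] with r hr
    have : (0:ℝ) < r := hr
    exact mem_closedBall_self (by linarith [this] : (0:ℝ) ≤ 1 * r)
  -- conversion from closed balls to open balls
  set K : ℝ≥0∞ := C * ENNReal.ofReal ((2:ℝ) ^ Q) * C with hKdef
  have hKt : K ≠ ⊤ :=
    (ENNReal.mul_lt_top (ENNReal.mul_lt_top ENNReal.coe_lt_top ENNReal.ofReal_lt_top)
      ENNReal.coe_lt_top).ne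
  have hSne : μ S ≠ ⊤ := measure_ne_top μ S
  set S' := toMeasurable μ S with hS'def
  have hS'm : MeasurableSet S' := measurableSet_toMeasurable μ S
  have hnum1 : ∀ r : ℝ, μ (S ∩ Metric.ball z r) = μ (S' ∩ Metric.ball z r) :=
    fun r => (Measure.measure_toMeasurable_inter measurableSet_ball hSne).symm
  have hnum2 : ∀ r : ℝ, μ (S ∩ closedBall z r) = μ (S' ∩ closedBall z r) :=
    fun r => (Measure.measure_toMeasurable_inter measurableSet_closedBall hSne).symm
  have hball_ev : ∀ᶠ r in 𝓝[>] (0:ℝ), μ (Metric.ball z r) ≠ 0 ∧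
      μ (closedBall z r) ≠ ⊤ ∧ μ (closedBall z r) ≤ K * μ (Metric.ball z r) := by
    filter_upwards [Ioo_mem_nhdsGT_of_mem (⟨le_rfl, half_pos hDpos⟩ : (0:ℝ) ∈ Ico 0 (D/2))]
      with r hr
    have hr0 : 0 < r := hr.1
    have hrD : r < D / 2 := hr.2
    have hrle : ENNReal.ofReal r ≤ EMetric.diam (univ : Set Z) := by
      calc ENNReal.ofReal r ≤ ENNReal.ofReal D := ENNReal.ofReal_le_ofReal (by linarith)
      _ = _ := ENNReal.ofReal_toReal hDnt
    have h2rle : ENNReal.ofReal (2*r) ≤ EMetric.diam (univ : Set Z) := by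
      calc ENNReal.ofReal (2*r) ≤ ENNReal.ofReal D := ENNReal.ofReal_le_ofReal (by linarith)
      _ = _ := ENNReal.ofReal_toReal hDnt
    refine ⟨?_, measure_ne_top μ _, ?_⟩
    · have hlow := (hC z r hr0 hrle).1
      intro h0
      rw [h0] at hlow
      have : ENNReal.ofReal (r ^ Q) / C = 0 := le_antisymm hlow zero_le
      rw [ENNReal.div_eq_zero_iff] at this
      rcases this with h | h
      · rw [ENNReal.ofReal_eq_zero] at h
        have : (0:ℝ) < r ^ Q := Real.rpow_pos_of_pos hr0 Q
        linarith
      · exact ENNReal.coe_ne_top h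
    · calc μ (closedBall z r) ≤ μ (Metric.ball z (2*r)) :=
            measure_mono (Metric.closedBall_subset_ball (by linarith))
      _ ≤ C * ENNReal.ofReal ((2*r) ^ Q) := (hC z (2*r) (by linarith) h2rle).2
      _ = C * (ENNReal.ofReal ((2:ℝ) ^ Q) * ENNReal.ofReal (r ^ Q)) := by
          rw [Real.mul_rpow (by norm_num) hr0.le, ENNReal.ofReal_mul (by positivity)]
      _ ≤ C * (ENNReal.ofReal ((2:ℝ) ^ Q) * (C * μ (Metric.ball z r))) := by
          refine mul_le_mul_right (mul_le_mul_right ?_ _) _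
          have h := (hC z r hr0 hrle).1
          calc ENNReal.ofReal (r ^ Q) = C * (ENNReal.ofReal (r ^ Q) / C) :=
                (ENNReal.mul_div_cancel hCne ENNReal.coe_ne_top).symm
          _ ≤ C * μ (Metric.ball z r) := mul_le_mul_right h _
      _ = K * μ (Metric.ball z r) := by rw [hKdef]; ring
  -- squeeze
  have hlim : Tendsto (fun r : ℝ => 1 - K * (1 - μ (S ∩ closedBall z r) / μ (closedBall z r)))
      (𝓝[>] (0:ℝ)) (𝓝 1) := by
    have T1 : Tendsto (fun r : ℝ => 1 - μ (S ∩ closedBall z r) / μ (closedBall z r))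
        (𝓝[>] (0:ℝ)) (𝓝 0) := by
      have hcont := (ENNReal.continuous_sub_left (ENNReal.one_ne_top)).tendsto (1:ℝ≥0∞)
      have := hcont.comp hcb
      simpa [Function.comp_def] using this
    have T2 : Tendsto (fun r : ℝ => K * (1 - μ (S ∩ closedBall z r) / μ (closedBall z r)))
        (𝓝[>] (0:ℝ)) (𝓝 0) := by
      have := ENNReal.Tendsto.const_mul T1 (Or.inr hKt)
      simpa using this
    have hcont := (ENNReal.continuous_sub_left (ENNReal.one_ne_top)).tendsto (0:ℝ≥0∞)
    have := hcont.comp T2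
    simpa [Function.comp_def] using this
  refine tendsto_of_tendsto_of_tendsto_of_le_of_le' hlim tendsto_const_nhds ?_ ?_
  · -- lower bound
    filter_upwards [hball_ev] with r hr
    obtain ⟨h0, ht, hKr⟩ := hr
    rw [hnum1 r, hnum2 r]
    have hBBc : μ (Metric.ball z r) ≤ μ (closedBall z r) :=
      measure_mono ball_subset_closedBall
    have hsum : μ (S' ∩ closedBall z r) + μ (closedBall z r \ S') = μ (closedBall z r) := by
      rw [inter_comm]
      exact measure_inter_add_diff _ hS'm
    have hBle : μ (Metric.ball z r) ≤ μ (S' ∩ Metric.ball z r) + μ (closedBall z r \ S') := by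
      calc μ (Metric.ball z r) = μ (Metric.ball z r ∩ S') + μ (Metric.ball z r \ S') :=
            (measure_inter_add_diff _ hS'm).symm
      _ ≤ _ := by
          rw [inter_comm]
          exact add_le_add le_rfl (measure_mono (diff_subset_diff_left ball_subset_closedBall))
    exact ennreal_density_lower h0 ht hBBc hsum hBle hKr
  · -- upper bound
    filter_upwards [hball_ev] with r hr
    obtain ⟨h0, ht, hKr⟩ := hr
    have hBt : μ (Metric.ball z r) ≠ ⊤ :=
      ((measure_mono ball_subset_closedBall).trans_lt (lt_top_iff_ne_top.2 ht)).ne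
    calc μ (S ∩ Metric.ball z r) / μ (Metric.ball z r) ≤
        μ (Metric.ball z r) / μ (Metric.ball z r) :=
          ENNReal.div_le_div_right (measure_mono inter_subset_right) _
    _ = 1 := ENNReal.div_self h0 hBt

end Density

end BK
theorem exists_density_point_of_thick_endpoints
    {Z : Type*} [MetricSpace Z] [CompactSpace Z] [MeasurableSpace Z] [BorelSpace Z]
    {Q : ℝ} (hQ : 1 < Q) (hreg : AhlforsRegular (μH[Q] : Measure Z) Q)
    (hfam : ∃ Γ : Set C(unitInterval, Z), (∀ γ ∈ Γ, Nonconstant γ) ∧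
      0 < modulus Q (μH[Q]) Γ)
    {G : Type*} [Group G] [MulAction G Z]
    (hcont : ∀ g : G, Continuous fun z : Z => g • z)
    (η : ℝ≥0 ≃ₜ ℝ≥0) (hqm : ∀ g : G, IsQuasiMobius η fun z : Z => g • z)
    (hfree : ∀ z : Z, ∃ g : G, g • z ≠ z)
    (hcocpt : ∃ δ : ℝ, 0 < δ ∧ ∀ z₁ z₂ z₃ : Z, z₁ ≠ z₂ → z₁ ≠ z₃ → z₂ ≠ z₃ →
      ∃ g : G, δ ≤ dist (g • z₁) (g • z₂) ∧ δ ≤ dist (g • z₁) (g • z₃) ∧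
        δ ≤ dist (g • z₂) (g • z₃))
    : ∃ (x x' : Z) (R R' : ℝ), 0 < R ∧ 0 < R' ∧
      Disjoint (Metric.ball x R) (Metric.ball x' R') ∧
      ∃ z ∈ Metric.ball x R,
        Filter.Tendsto
          (fun r : ℝ => (μH[Q] : Measure Z)
              ({w ∈ Metric.ball x R | ∃ γ : C(unitInterval, Z),
                IsThick Q (μH[Q]) γ ∧ γ 0 = w ∧ γ 1 ∈ Metric.ball x' R'} ∩ Metric.ball z r) /
            (μH[Q] : Measure Z) (Metric.ball z r))
          (nhdsWithin 0 (Set.Ioi 0)) (nhds 1) := by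
  classical
  obtain ⟨Γ, hΓnc, hΓpos⟩ := hfam
  have hQ0 : (0:ℝ) < Q := zero_lt_one.trans hQ
  obtain ⟨γ₀, hγ₀Γ, hγ₀th⟩ := BK.exists_thick hQ0 hΓnc hΓpos
  obtain ⟨s, t, hst⟩ := hΓnc γ₀ hγ₀Γ
  have hmain : ∃ (a b : ℝ) (h0 : 0 ≤ a) (hab : a ≤ b) (h1 : b ≤ 1),
      γ₀ ⟨a, h0, hab.trans h1⟩ ≠ γ₀ ⟨b, h0.trans hab, h1⟩ := by
    rcases le_total (s:ℝ) (t:ℝ) with h | h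
    · exact ⟨s, t, s.2.1, h, t.2.2, hst⟩
    · exact ⟨t, s, t.2.1, h, s.2.2, Ne.symm hst⟩
  obtain ⟨a, b, h0, hab, h1, hneq⟩ := hmain
  set γ₁ := BK.subPath γ₀ h0 hab h1 with hγ₁
  have hγ₁th : IsThick Q (μH[Q]) γ₁ := BK.isThick_subPath hQ0 hγ₀th h0 hab h1 hneq
  have hne01 : γ₁ 0 ≠ γ₁ 1 := by
    rw [hγ₁, BK.subPath_zero, BK.subPath_one]
    exact hneq
  have hdpos : 0 < dist (γ₁ 0) (γ₁ 1) := dist_pos.2 hne01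
  have hSpos := BK.measure_thick_endpoints_pos hQ0 hγ₁th hne01
  have hD : (0:ℝ≥0∞) < EMetric.diam (Set.univ : Set Z) :=
    lt_of_lt_of_le (edist_pos.2 hne01)
      (EMetric.edist_le_diam_of_mem (Set.mem_univ _) (Set.mem_univ _))
  refine ⟨γ₁ 0, γ₁ 1, dist (γ₁ 0) (γ₁ 1) / 4, dist (γ₁ 0) (γ₁ 1) / 4,
    by positivity, by positivity, ?_, ?_⟩
  · exact Metric.ball_disjoint_ball (by linarith)
  · exact BK.exists_density_point hreg hQ0 hD (fun w hw => hw.1) hSpos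
end
end
end
end
end
end
end
end

section
/- Let (Z,d) be a compact metric space. Suppose that for each k ∈ ℕ we are given a ball B_k = B(p_k, R_k) ⊆ Z, distinct points x_k^1, x_k^2, x_k^3 in the closed ball B̄(p_k, λ_k R_k) with d(x_k^i, x_k^j) > δ_k R_k for i ≠ j in {1,2,3}, where λ_k, δ_k > 0, and an η-quasi-Möbius homeomorphism g_k:Z→Z such that the points y_k^i := g_k(x_k^i) satisfy d(y_k^i, y_k^j) > δ' for i ≠ j, where η and δ' > 0 are independent of k. If lim_{k→∞} λ_k = 0 and the sequence (R_k) is bounded, then diam(Z \ g_k(B_k)) → 0 as k → ∞. -/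
open Metric Set MeasureTheory Filter Topology unitInterval
open scoped NNReal ENNReal

/-
Let `z = g u` and `w = g v` lie outside `g(B(p,R))`. As `u, v` lie outside `B(p,R)` while the
`x^i` cluster in `B̄(p, λR)`, the cross-ratio `[u, x^j, v, x^i]` is at most `16λ`, hence
`[z, y^j, w, y^i] ≤ η(16λ)`. Choosing `i ≠ j` with `d(z, y^i), d(w, y^j) ≥ δ'/2` (possible since
the `y^i` are `δ'`-separated) turns this into `d(z, w) ≤ η(16λ) · diam(Z)² / δ'`, and
`η(16λ) → 0` because a self-homeomorphism of `[0,∞)` fixes `0`.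
-/

theorem Homeomorph.strictMono_nnreal (η : ℝ≥0 ≃ₜ ℝ≥0) : StrictMono η := by
  refine η.continuous.strictMono_of_inj η.injective |>.resolve_right fun hanti => ?_
  -- a decreasing `η` would be bounded by `η 0`, contradicting surjectivity
  have h := hanti.antitone (zero_le : 0 ≤ η.symm (η 0 + 1))
  rw [η.apply_symm_apply] at h
  exact (lt_add_one (η 0)).not_ge h

theorem Homeomorph.map_zero_nnreal (η : ℝ≥0 ≃ₜ ℝ≥0) : η 0 = 0 := by
  have h := η.strictMono_nnreal.monotone (zero_le : 0 ≤ η.symm 0)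
  rwa [η.apply_symm_apply, nonpos_iff_eq_zero] at h

theorem Fin.exists_ne_of_pairwise_or {P Q : Fin 3 → Prop}
    (hP : ∀ i j : Fin 3, i ≠ j → P i ∨ P j) (hQ : ∀ i j : Fin 3, i ≠ j → Q i ∨ Q j) :
    ∃ i j : Fin 3, i ≠ j ∧ P i ∧ Q j := by
  rcases hP 0 1 (by decide) with h0 | h1
  · rcases hQ 1 2 (by decide) with h | h
    · exact ⟨0, 1, by decide, h0, h⟩
    · exact ⟨0, 2, by decide, h0, h⟩
  · rcases hQ 0 2 (by decide) with h | h
    · exact ⟨1, 0, by decide, h1, h⟩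
    · exact ⟨1, 2, by decide, h1, h⟩

section CrossRatio

variable {Z : Type*} [MetricSpace Z]

theorem coe_crossRatio (z₁ z₂ z₃ z₄ : Z) :
    (crossRatio z₁ z₂ z₃ z₄ : ℝ) = dist z₁ z₃ * dist z₂ z₄ / (dist z₁ z₄ * dist z₂ z₃) := by
  simp [crossRatio, coe_nndist]

theorem half_le_dist_or_half_le_dist {a b : Z} {δ : ℝ} (hab : δ < dist a b) (z : Z) :
    δ / 2 ≤ dist z a ∨ δ / 2 ≤ dist z b := by
  by_contra! h
  linarith [dist_triangle_left a b z]

theorem exists_ne_half_le_dist {y : Fin 3 → Z} {δ : ℝ}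
    (hy : ∀ i j, i ≠ j → δ < dist (y i) (y j)) (z w : Z) :
    ∃ i j, i ≠ j ∧ δ / 2 ≤ dist z (y i) ∧ δ / 2 ≤ dist w (y j) :=
  Fin.exists_ne_of_pairwise_or (fun i j hij => half_le_dist_or_half_le_dist (hy i j hij) z)
    (fun i j hij => half_le_dist_or_half_le_dist (hy i j hij) w)

theorem half_le_dist_of_mem_closedBall {p a u : Z} {lam ρ : ℝ} (hlam : lam ≤ 1 / 2)
    (ha : a ∈ closedBall p (lam * ρ)) (hu : ρ ≤ dist u p) (hρ : 0 < ρ) :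
    ρ / 2 ≤ dist u a := by
  have := mem_closedBall.mp ha
  nlinarith [dist_triangle u a p]

theorem crossRatio_le_of_mem_closedBall {p a b u v : Z} {lam ρ : ℝ} (hρ : 0 < ρ)
    (hlam : lam ≤ 1 / 2) (ha : a ∈ closedBall p (lam * ρ)) (hb : b ∈ closedBall p (lam * ρ))
    (hu : ρ ≤ dist u p) (hv : ρ ≤ dist v p) :
    (crossRatio u a v b : ℝ) ≤ 16 * lam := by
  set A := dist u b
  set B := dist a v
  set s := dist a b
  have hA : ρ / 2 ≤ A := half_le_dist_of_mem_closedBall hlam hb hu hρ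
  have hB : ρ / 2 ≤ B :=
    (half_le_dist_of_mem_closedBall hlam ha hv hρ).trans_eq (dist_comm v a)
  have hlam₀ : 0 ≤ lam := by
    have := dist_nonneg.trans (mem_closedBall.mp ha)
    exact nonneg_of_mul_nonneg_left this hρ
  have hs : s ≤ 2 * (lam * ρ) := by
    linarith [dist_triangle_right a b p, mem_closedBall.mp ha, mem_closedBall.mp hb]
  have hs' : s ≤ A + B := by nlinarith
  have hAB : ρ * (A + B) ≤ 4 * (A * B) := by nlinarith
  have huv : dist u v ≤ 2 * (A + B) := by
    linarith [dist_triangle4 u b a v, dist_comm b a]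
  rw [coe_crossRatio, div_le_iff₀ (mul_pos (by linarith) (by linarith))]
  calc dist u v * s ≤ 2 * (A + B) * (2 * (lam * ρ)) := by gcongr
    _ = 4 * lam * (ρ * (A + B)) := by ring
    _ ≤ 4 * lam * (4 * (A * B)) := by gcongr
    _ = 16 * lam * (A * B) := by ring

theorem dist_le_crossRatio_mul {z w a b : Z} {δ D : ℝ} (hδ : 0 < δ) (hab : δ < dist a b)
    (hzb : dist z b ≤ D) (haw : dist a w ≤ D) (hzb₀ : z ≠ b) (haw₀ : a ≠ w) :
    dist z w ≤ crossRatio z a w b * (D ^ 2 / δ) := by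
  have key : dist z w * dist a b = crossRatio z a w b * (dist z b * dist a w) := by
    have := dist_pos.mpr hzb₀
    have := dist_pos.mpr haw₀
    rw [coe_crossRatio, dist_comm a b]
    field_simp
  have hD : 0 ≤ D := dist_nonneg.trans hzb
  rw [mul_div_assoc', le_div_iff₀ hδ]
  calc dist z w * δ ≤ dist z w * dist a b := by gcongr
    _ = crossRatio z a w b * (dist z b * dist a w) := key
    _ ≤ crossRatio z a w b * D ^ 2 := by rw [sq]; gcongr

end CrossRatio

section QuasiMobius

variable {Z : Type*} [MetricSpace Z] [BoundedSpace Z] {η : ℝ≥0 ≃ₜ ℝ≥0} {g : Z ≃ₜ Z} {p : Z}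
  {x : Fin 3 → Z} {ρ lam δ : ℝ}

theorem dist_le_of_notMem_image_ball (hg : IsQuasiMobius η g) (hρ : 0 < ρ) (hlam : lam ≤ 1 / 2)
    (hδ : 0 < δ) (hx : ∀ i, x i ∈ closedBall p (lam * ρ))
    (hy : ∀ i j, i ≠ j → δ < dist (g (x i)) (g (x j))) {z w : Z} (hz : z ∉ g '' ball p ρ)
    (hw : w ∉ g '' ball p ρ) :
    dist z w ≤ η (Real.toNNReal (16 * lam)) * (diam (univ : Set Z) ^ 2 / δ) := by
  obtain ⟨u, rfl⟩ := g.surjective z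
  obtain ⟨v, rfl⟩ := g.surjective w
  have hu : ρ ≤ dist u p := not_lt.mp fun h => hz ⟨u, mem_ball.mpr h, rfl⟩
  have hv : ρ ≤ dist v p := not_lt.mp fun h => hw ⟨v, mem_ball.mpr h, rfl⟩
  rcases eq_or_ne u v with rfl | huv
  · rw [dist_self]
    positivity
  have hne {a : Z} (ha : ρ ≤ dist a p) (i : Fin 3) : a ≠ x i := by
    intro h
    have := half_le_dist_of_mem_closedBall hlam (hx i) ha hρ
    rw [h, dist_self] at this
    linarith
  obtain ⟨i, j, hij, hi, hj⟩ := exists_ne_half_le_dist hy (g u) (g v)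
  have hxji : x j ≠ x i := by
    intro h
    have := hy j i hij.symm
    rw [h, dist_self] at this
    linarith
  have hcr : crossRatio (g u) (g (x j)) (g v) (g (x i)) ≤ η (Real.toNNReal (16 * lam)) :=
    (hg u (x j) v (x i) (hne hu j) huv (hne hu i) (hne hv j).symm hxji (hne hv i)).trans <|
      η.strictMono_nnreal.monotone <| NNReal.le_toNNReal_of_coe_le
        (crossRatio_le_of_mem_closedBall hρ hlam (hx j) (hx i) hu hv)
  have hdiam (a b : Z) : dist a b ≤ diam (univ : Set Z) :=
    dist_le_diam_of_mem (.all univ) trivial trivial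
  calc dist (g u) (g v)
      ≤ crossRatio (g u) (g (x j)) (g v) (g (x i)) * (diam (univ : Set Z) ^ 2 / δ) :=
        dist_le_crossRatio_mul hδ (hy j i hij.symm) (hdiam _ _) (hdiam _ _)
          (dist_pos.mp (by linarith)) (dist_pos.mp (by rw [dist_comm]; linarith))
    _ ≤ η (Real.toNNReal (16 * lam)) * (diam (univ : Set Z) ^ 2 / δ) :=
        mul_le_mul_of_nonneg_right hcr (by positivity)

theorem diam_compl_image_ball_le (hg : IsQuasiMobius η g) (hρ : 0 < ρ) (hlam : lam ≤ 1 / 2)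
    (hδ : 0 < δ) (hx : ∀ i, x i ∈ closedBall p (lam * ρ))
    (hy : ∀ i j, i ≠ j → δ < dist (g (x i)) (g (x j))) :
    diam (univ \ g '' ball p ρ) ≤ η (Real.toNNReal (16 * lam)) * (diam (univ : Set Z) ^ 2 / δ) :=
  diam_le_of_forall_dist_le (by positivity) fun _ hz _ hw =>
    dist_le_of_notMem_image_ball hg hρ hlam hδ hx hy hz.2 hw.2

end QuasiMobius

theorem complement_image_ball_diam_tendsto_zero_general
    {Z : Type*} [MetricSpace Z] [CompactSpace Z]
    (p : ℕ → Z) (R lam : ℕ → ℝ) (x : ℕ → Fin 3 → Z) (g : ℕ → (Z ≃ₜ Z))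
    (η : ℝ≥0 ≃ₜ ℝ≥0) (δ' : ℝ) (hδ' : 0 < δ')
    (hR : ∀ k, 0 < R k)
    (hx : ∀ k i, x k i ∈ Metric.closedBall (p k) (lam k * R k))
    (hqm : ∀ k, IsQuasiMobius η (g k))
    (hysep : ∀ k, ∀ i j : Fin 3, i ≠ j → δ' < dist (g k (x k i)) (g k (x k j)))
    (hlam0 : Filter.Tendsto lam Filter.atTop (nhds 0))
    : Filter.Tendsto
        (fun k => Metric.diam (Set.univ \ (g k) '' Metric.ball (p k) (R k)))
        Filter.atTop (nhds 0) := by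
  set C := diam (univ : Set Z) ^ 2 / δ'
  have h16 : Tendsto (fun k => Real.toNNReal (16 * lam k)) atTop (𝓝 0) :=
    (continuous_real_toNNReal.tendsto' 0 0 Real.toNNReal_zero).comp
      (by simpa using hlam0.const_mul 16)
  have hη : Tendsto (fun k => (η (Real.toNNReal (16 * lam k)) : ℝ) * C) atTop (𝓝 0) := by
    have hη16 := (η.continuous.tendsto' 0 0 η.map_zero_nnreal).comp h16
    simpa using (NNReal.tendsto_coe.mpr hη16).mul_const C
  refine squeeze_zero' (.of_forall fun _ => diam_nonneg) ?_ hη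
  filter_upwards [hlam0.eventually (ge_mem_nhds one_half_pos)] with k hk
  exact diam_compl_image_ball_le (hqm k) (hR k) hk hδ' (hx k) (hysep k)

theorem complement_image_ball_diam_tendsto_zero
    {Z : Type*} [MetricSpace Z] [CompactSpace Z]
    (p : ℕ → Z) (R lam δ : ℕ → ℝ) (x : ℕ → Fin 3 → Z) (g : ℕ → (Z ≃ₜ Z))
    (η : ℝ≥0 ≃ₜ ℝ≥0) (δ' : ℝ) (hδ' : 0 < δ')
    (hR : ∀ k, 0 < R k) (hlam : ∀ k, 0 < lam k) (hδ : ∀ k, 0 < δ k)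
    (hx : ∀ k i, x k i ∈ Metric.closedBall (p k) (lam k * R k))
    (hxsep : ∀ k, ∀ i j : Fin 3, i ≠ j → δ k * R k < dist (x k i) (x k j))
    (hqm : ∀ k, IsQuasiMobius η (g k))
    (hysep : ∀ k, ∀ i j : Fin 3, i ≠ j → δ' < dist (g k (x k i)) (g k (x k j)))
    (hlam0 : Filter.Tendsto lam Filter.atTop (nhds 0))
    (hRbdd : ∃ M : ℝ, ∀ k, R k ≤ M)
    : Filter.Tendsto
        (fun k => Metric.diam (Set.univ \ (g k) '' Metric.ball (p k) (R k)))
        Filter.atTop (nhds 0) :=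
  complement_image_ball_diam_tendsto_zero_general p R lam x g η δ' hδ' hR hx hqm hysep hlam0
end
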